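/- arXiv:2007.02451 — 4 statements merged into one kernel-verified Lean document; each statement's English description precedes it below -/
import Mathlib

section
/- If a bounded linear operator T satisfies property (UW_Π) (i.e., σ_a(T)\σ_uw(T) = Π(T)), then Π^0(T) = Π(T) = Π_a^0(T). -/
namespace OpSpec

variable {X : Type*} [NormedAddCommGroup X] [NormedSpace ℂ X]

noncomputable section

/-- α(S): the dimension of the kernel of `S`. -/
def alpha (S : X →L[ℂ] X) : Cardinal := Module.rank ℂ (LinearMap.ker (S : X →ₗ[ℂ] X))

/-- β(S): the codimension of the range of `S`. -/
def beta (S : X →L[ℂ] X) : Cardinal := Module.rank ℂ (X ⧸ LinearMap.range (S : X →ₗ[ℂ] X))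

/-- `S` is bounded below (injective with closed range). -/
def boundedBelow (S : X →L[ℂ] X) : Prop := ∃ c > 0, ∀ x : X, c * ‖x‖ ≤ ‖S x‖

/-- finite ascent: p(S) < ∞. -/
def finAsc (S : X →L[ℂ] X) : Prop :=
  ∃ n : ℕ, LinearMap.ker ((S ^ n : X →L[ℂ] X) : X →ₗ[ℂ] X) = LinearMap.ker ((S ^ (n + 1) : X →L[ℂ] X) : X →ₗ[ℂ] X)

/-- finite descent: q(S) < ∞. -/
def finDesc (S : X →L[ℂ] X) : Prop :=
  ∃ n : ℕ, LinearMap.range ((S ^ n : X →L[ℂ] X) : X →ₗ[ℂ] X) = LinearMap.range ((S ^ (n + 1) : X →L[ℂ] X) : X →ₗ[ℂ] X)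

/-- upper semi-Weyl operator: upper semi-Fredholm with index ≤ 0. -/
def isUSW (S : X →L[ℂ] X) : Prop :=
  alpha S < Cardinal.aleph0 ∧ IsClosed (LinearMap.range (S : X →ₗ[ℂ] X) : Set X) ∧ alpha S ≤ beta S

/-- Weyl operator: Fredholm with index 0. -/
def isWeyl (S : X →L[ℂ] X) : Prop :=
  alpha S < Cardinal.aleph0 ∧ beta S < Cardinal.aleph0 ∧
    IsClosed (LinearMap.range (S : X →ₗ[ℂ] X) : Set X) ∧ alpha S = beta S

/-- left Drazin invertible: finite ascent p with R(S^{p+1}) closed. -/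
def isLD (S : X →L[ℂ] X) : Prop :=
  ∃ p : ℕ, LinearMap.ker ((S ^ p : X →L[ℂ] X) : X →ₗ[ℂ] X) = LinearMap.ker ((S ^ (p + 1) : X →L[ℂ] X) : X →ₗ[ℂ] X) ∧
    IsClosed (LinearMap.range ((S ^ (p + 1) : X →L[ℂ] X) : X →ₗ[ℂ] X) : Set X)

/-- upper semi-Weyl condition for a (not necessarily continuous) linear map. -/
def uswLin {Y : Type*} [NormedAddCommGroup Y] [Module ℂ Y] (S : Y →ₗ[ℂ] Y) : Prop :=
  Module.rank ℂ (LinearMap.ker S) < Cardinal.aleph0 ∧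
    IsClosed (LinearMap.range S : Set Y) ∧
    Module.rank ℂ (LinearMap.ker S) ≤ Module.rank ℂ (Y ⧸ LinearMap.range S)

/-- upper semi-B-Weyl: for some n, R(S^n) is closed and the restriction of S to R(S^n)
is upper semi-Weyl. -/
def isUSBW (S : X →L[ℂ] X) : Prop :=
  ∃ n : ℕ, IsClosed (LinearMap.range ((S ^ n : X →L[ℂ] X) : X →ₗ[ℂ] X) : Set X) ∧
    ∀ h : ∀ x ∈ LinearMap.range ((S ^ n : X →L[ℂ] X) : X →ₗ[ℂ] X), (S : X →ₗ[ℂ] X) x ∈ LinearMap.range ((S ^ n : X →L[ℂ] X) : X →ₗ[ℂ] X),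
      uswLin ((S : X →ₗ[ℂ] X).restrict h)

variable (T : X →L[ℂ] X)

/-- the spectrum σ(T). -/
def spec : Set ℂ := spectrum ℂ T

/-- the approximate point spectrum σ_a(T). -/
def specA : Set ℂ := {l | ¬ boundedBelow (T - l • 1)}

/-- the point spectrum (eigenvalues) σ_p(T). -/
def specP : Set ℂ := {l | ∃ x : X, x ≠ 0 ∧ T x = l • x}

/-- the Weyl spectrum σ_w(T). -/
def specW : Set ℂ := {l | ¬ isWeyl (T - l • 1)}

/-- the upper semi-Weyl spectrum σ_uw(T). -/
def specUW : Set ℂ := {l | ¬ isUSW (T - l • 1)}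

/-- the upper semi-B-Weyl spectrum σ_ubw(T). -/
def specUBW : Set ℂ := {l | ¬ isUSBW (T - l • 1)}

/-- the left Drazin spectrum σ_ld(T). -/
def specLD : Set ℂ := {l | ¬ isLD (T - l • 1)}

/-- the Drazin spectrum σ_d(T). -/
def specD : Set ℂ := {l | ¬ (finAsc (T - l • 1) ∧ finDesc (T - l • 1))}

/-- the Browder spectrum σ_b(T). -/
def specB : Set ℂ :=
  {l | ¬ (alpha (T - l • 1) < Cardinal.aleph0 ∧ beta (T - l • 1) < Cardinal.aleph0 ∧
      IsClosed (LinearMap.range ((T - l • 1 : X →L[ℂ] X) : X →ₗ[ℂ] X) : Set X) ∧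
      finAsc (T - l • 1) ∧ finDesc (T - l • 1))}

/-- isolated points of a subset of ℂ. -/
def isoPts (A : Set ℂ) : Set ℂ := {l ∈ A | ∃ U ∈ nhds l, U ∩ A = {l}}

/-- Π(T): the poles of T. -/
def poles : Set ℂ := {l ∈ spec T | finAsc (T - l • 1) ∧ finDesc (T - l • 1)}

/-- Π⁰(T): poles of finite rank. -/
def poles0 : Set ℂ := {l ∈ poles T | alpha (T - l • 1) < Cardinal.aleph0}

/-- Π_a(T): the left poles of T. -/
def lpoles : Set ℂ := {l ∈ specA T | isLD (T - l • 1)}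

/-- Π_a⁰(T): left poles of finite rank. -/
def lpoles0 : Set ℂ := {l ∈ lpoles T | alpha (T - l • 1) < Cardinal.aleph0}

/-- E(T) = iso σ(T) ∩ σ_p(T). -/
def setE : Set ℂ := isoPts (spec T) ∩ specP T

/-- E⁰(T): isolated eigenvalues of σ(T) of finite multiplicity. -/
def setE0 : Set ℂ := {l ∈ setE T | alpha (T - l • 1) < Cardinal.aleph0}

/-- E_a(T) = iso σ_a(T) ∩ σ_p(T). -/
def setEa : Set ℂ := isoPts (specA T) ∩ specP T

/-- E_a⁰(T): isolated eigenvalues of σ_a(T) of finite multiplicity. -/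
def setEa0 : Set ℂ := {l ∈ setEa T | alpha (T - l • 1) < Cardinal.aleph0}

/-- property (UW_Π): σ_a(T) \ σ_uw(T) = Π(T). -/
def propUWPi : Prop := specA T \ specUW T = poles T

/-- property (UW_E): σ_a(T) \ σ_uw(T) = E(T). -/
def propUWE : Prop := specA T \ specUW T = setE T

/-- property (UW_{E_a}): σ_a(T) \ σ_uw(T) = E_a(T). -/
def propUWEa : Prop := specA T \ specUW T = setEa T

/-- property (Z_{Π_a}): σ(T) \ σ_w(T) = Π_a(T). -/
def propZPia : Prop := spec T \ specW T = lpoles T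

/-- property (Z_{E_a}): σ(T) \ σ_w(T) = E_a(T). -/
def propZEa : Prop := spec T \ specW T = setEa T

/-- property (gb): σ_a(T) \ σ_ubw(T) = Π(T). -/
def propGb : Prop := specA T \ specUBW T = poles T

/-- a-Browder's theorem: σ_a(T) \ σ_uw(T) = Π_a⁰(T). -/
def aBrowder : Prop := specA T \ specUW T = lpoles0 T

end
end OpSpec

open OpSpec Cardinal

namespace StmtAux

open Cardinal

variable {X : Type*} [NormedAddCommGroup X] [NormedSpace ℂ X]

lemma pow_apply_add (S : X →L[ℂ] X) (a b : ℕ) (x : X) :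
    (S ^ (a + b)) x = (S ^ a) ((S ^ b) x) := by
  rw [pow_add]; rfl

lemma ker_pow_mono (S : X →L[ℂ] X) {m n : ℕ} (h : m ≤ n) :
    LinearMap.ker ((S ^ m : X →L[ℂ] X) : X →ₗ[ℂ] X) ≤ LinearMap.ker ((S ^ n : X →L[ℂ] X) : X →ₗ[ℂ] X) := by
  intro x hx
  obtain ⟨k, rfl⟩ := Nat.exists_eq_add_of_le h
  have hx' : (S ^ m) x = 0 := hx
  show (S ^ (m + k)) x = 0
  rw [show m + k = k + m from by omega, pow_apply_add, hx', map_zero]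

lemma range_pow_anti (S : X →L[ℂ] X) {m n : ℕ} (h : m ≤ n) :
    LinearMap.range ((S ^ n : X →L[ℂ] X) : X →ₗ[ℂ] X) ≤ LinearMap.range ((S ^ m : X →L[ℂ] X) : X →ₗ[ℂ] X) := by
  rintro _ ⟨x, rfl⟩
  obtain ⟨k, rfl⟩ := Nat.exists_eq_add_of_le h
  exact ⟨(S ^ k) x, (pow_apply_add S m k x).symm⟩

lemma ker_stab (S : X →L[ℂ] X) {p : ℕ}
    (hp : LinearMap.ker ((S ^ p : X →L[ℂ] X) : X →ₗ[ℂ] X) = LinearMap.ker ((S ^ (p + 1) : X →L[ℂ] X) : X →ₗ[ℂ] X)) :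
    ∀ n, p ≤ n → LinearMap.ker ((S ^ n : X →L[ℂ] X) : X →ₗ[ℂ] X) = LinearMap.ker ((S ^ p : X →L[ℂ] X) : X →ₗ[ℂ] X) := by
  intro n hn
  obtain ⟨k, rfl⟩ := Nat.exists_eq_add_of_le hn
  induction k with
  | zero => rfl
  | succ k ih =>
    refine le_antisymm ?_ (ker_pow_mono S (by omega))
    intro x hx
    have h1 : (S ^ (p + k)) (S x) = 0 := by
      have h0 : (S ^ (p + k + 1)) x = 0 := hx
      rw [show p + k + 1 = (p + k) + 1 from rfl, pow_apply_add] at h0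
      simpa using h0
    have h2 : S x ∈ LinearMap.ker ((S ^ p : X →L[ℂ] X) : X →ₗ[ℂ] X) := (ih (by omega)) ▸ h1
    have h3 : x ∈ LinearMap.ker ((S ^ (p + 1) : X →L[ℂ] X) : X →ₗ[ℂ] X) := by
      show (S ^ (p + 1)) x = 0
      rw [pow_apply_add]
      rw [pow_one]; exact h2
    exact hp ▸ h3

lemma range_stab (S : X →L[ℂ] X) {q : ℕ}
    (hq : LinearMap.range ((S ^ q : X →L[ℂ] X) : X →ₗ[ℂ] X) = LinearMap.range ((S ^ (q + 1) : X →L[ℂ] X) : X →ₗ[ℂ] X)) :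
    ∀ n, q ≤ n → LinearMap.range ((S ^ n : X →L[ℂ] X) : X →ₗ[ℂ] X) = LinearMap.range ((S ^ q : X →L[ℂ] X) : X →ₗ[ℂ] X) := by
  intro n hn
  obtain ⟨k, rfl⟩ := Nat.exists_eq_add_of_le hn
  induction k with
  | zero => rfl
  | succ k ih =>
    have step : LinearMap.range ((S ^ (q + k) : X →L[ℂ] X) : X →ₗ[ℂ] X) ≤ LinearMap.range ((S ^ (q + (k + 1)) : X →L[ℂ] X) : X →ₗ[ℂ] X) := by
      rintro _ ⟨x, rfl⟩
      have hx : (S ^ q) x ∈ LinearMap.range ((S ^ (q + 1) : X →L[ℂ] X) : X →ₗ[ℂ] X) := hq ▸ ⟨x, rfl⟩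
      obtain ⟨w, hw⟩ := hx
      refine ⟨w, ?_⟩
      change (S ^ (q + 1)) w = (S ^ q) x at hw
      change (S ^ (q + (k + 1))) w = (S ^ (q + k)) x
      rw [show q + (k + 1) = k + (q + 1) from by omega, pow_apply_add, hw,
        ← pow_apply_add, show k + q = q + k from by omega]
    refine le_antisymm (range_pow_anti S (by omega)) ?_
    intro y hy
    exact step ((ih (by omega)).symm ▸ hy)

/-- rank-nullity style equation for kernels of powers. -/
lemma rank_ker_pow_succ (S : X →L[ℂ] X) (n : ℕ) :
    Module.rank ℂ (LinearMap.ker ((S ^ (n + 1) : X →L[ℂ] X) : X →ₗ[ℂ] X)) =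
      Module.rank ℂ ↥(LinearMap.ker ((S ^ n : X →L[ℂ] X) : X →ₗ[ℂ] X) ⊓ LinearMap.range (S : X →ₗ[ℂ] X)) +
        Module.rank ℂ (LinearMap.ker (S : X →ₗ[ℂ] X)) := by
  set K := LinearMap.ker ((S ^ (n + 1) : X →L[ℂ] X) : X →ₗ[ℂ] X)
  let g : K →ₗ[ℂ] X := (S : X →ₗ[ℂ] X) ∘ₗ K.subtype
  have hker : LinearMap.ker g = (LinearMap.ker (S : X →ₗ[ℂ] X)).comap K.subtype := by
    ext x; rfl
  have hle : LinearMap.ker (S : X →ₗ[ℂ] X) ≤ K := by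
    have := @ker_pow_mono X _ _ S 1 (n + 1) (by omega)
    rwa [pow_one] at this
  have hrange : LinearMap.range g = LinearMap.ker ((S ^ n : X →L[ℂ] X) : X →ₗ[ℂ] X) ⊓ LinearMap.range (S : X →ₗ[ℂ] X) := by
    apply le_antisymm
    · rintro _ ⟨⟨x, hx⟩, rfl⟩
      refine ⟨?_, ⟨x, rfl⟩⟩
      have hx' : (S ^ (n + 1)) x = 0 := hx
      rw [show n + 1 = n + 1 from rfl, pow_apply_add] at hx'
      exact hx'
    · rintro y ⟨hy1, x, rfl⟩
      have hx : x ∈ K := by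
        show (S ^ (n + 1)) x = 0
        rw [pow_apply_add]
        exact hy1
      exact ⟨⟨x, hx⟩, rfl⟩
  have h1 := LinearMap.rank_range_add_rank_ker g
  rw [hrange, hker] at h1
  rw [← h1, (Submodule.comapSubtypeEquivOfLe hle).rank_eq]

lemma rank_ker_pow_lt_aleph0 (S : X →L[ℂ] X)
    (hα : Module.rank ℂ (LinearMap.ker (S : X →ₗ[ℂ] X)) < ℵ₀) (n : ℕ) :
    Module.rank ℂ (LinearMap.ker ((S ^ n : X →L[ℂ] X) : X →ₗ[ℂ] X)) < ℵ₀ := by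
  induction n with
  | zero =>
    rw [pow_zero]
    have : LinearMap.ker ((1 : X →L[ℂ] X) : X →ₗ[ℂ] X) = ⊥ := by
      ext x; simp [ContinuousLinearMap.one_apply]
    rw [this]
    simpa using (by exact aleph0_pos : (0 : Cardinal) < ℵ₀)
  | succ n ih =>
    rw [rank_ker_pow_succ]
    exact add_lt_aleph0 (lt_of_le_of_lt (Submodule.rank_mono inf_le_left) ih) hα

/-- dimension drop when intersecting with the range. -/
lemma rank_le_inf_add_beta (S : X →L[ℂ] X) (n : ℕ) :
    Module.rank ℂ (LinearMap.ker ((S ^ n : X →L[ℂ] X) : X →ₗ[ℂ] X)) ≤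
      Module.rank ℂ ↥(LinearMap.ker ((S ^ n : X →L[ℂ] X) : X →ₗ[ℂ] X) ⊓ LinearMap.range (S : X →ₗ[ℂ] X)) +
        Module.rank ℂ (X ⧸ LinearMap.range (S : X →ₗ[ℂ] X)) := by
  set K := LinearMap.ker ((S ^ n : X →L[ℂ] X) : X →ₗ[ℂ] X)
  let g : K →ₗ[ℂ] X ⧸ LinearMap.range (S : X →ₗ[ℂ] X) := (LinearMap.range (S : X →ₗ[ℂ] X)).mkQ ∘ₗ K.subtype
  have hker : LinearMap.ker g = (K ⊓ LinearMap.range (S : X →ₗ[ℂ] X)).comap K.subtype := by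
    ext ⟨x, hx⟩
    simp [g, Submodule.mem_comap, LinearMap.mem_ker, Submodule.Quotient.mk_eq_zero, hx]
  have h1 := LinearMap.rank_range_add_rank_ker g
  have h2 : Module.rank ℂ (LinearMap.range g) ≤ Module.rank ℂ (X ⧸ LinearMap.range (S : X →ₗ[ℂ] X)) :=
    Submodule.rank_le _
  have h3 : Module.rank ℂ (LinearMap.ker g) = Module.rank ℂ ↥(K ⊓ LinearMap.range (S : X →ₗ[ℂ] X)) := by
    rw [hker, (Submodule.comapSubtypeEquivOfLe inf_le_left).rank_eq]
  calc Module.rank ℂ K = Module.rank ℂ (LinearMap.range g) + Module.rank ℂ (LinearMap.ker g) :=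
        h1.symm
    _ ≤ Module.rank ℂ (X ⧸ LinearMap.range (S : X →ₗ[ℂ] X)) + Module.rank ℂ ↥(K ⊓ LinearMap.range (S : X →ₗ[ℂ] X)) := by
        rw [h3]; exact add_le_add h2 le_rfl
    _ = _ := add_comm _ _

/-- finite ascent plus finite kernel forces `α ≤ β` (finite-`β` case). -/
lemma alpha_le_beta_fin (S : X →L[ℂ] X)
    {p : ℕ} (hp : ∀ n, p ≤ n → LinearMap.ker ((S ^ n : X →L[ℂ] X) : X →ₗ[ℂ] X) = LinearMap.ker ((S ^ p : X →L[ℂ] X) : X →ₗ[ℂ] X))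
    (hα : Module.rank ℂ (LinearMap.ker (S : X →ₗ[ℂ] X)) < ℵ₀)
    (hβ : Module.rank ℂ (X ⧸ LinearMap.range (S : X →ₗ[ℂ] X)) < ℵ₀) :
    Module.rank ℂ (LinearMap.ker (S : X →ₗ[ℂ] X)) ≤ Module.rank ℂ (X ⧸ LinearMap.range (S : X →ₗ[ℂ] X)) := by
  have hstep := rank_ker_pow_succ S
  have hineq := rank_le_inf_add_beta S
  have hfin := rank_ker_pow_lt_aleph0 S hα
  set α := Module.rank ℂ (LinearMap.ker (S : X →ₗ[ℂ] X))
  set β := Module.rank ℂ (X ⧸ LinearMap.range (S : X →ₗ[ℂ] X))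
  set k : ℕ → ℕ := fun n => toNat (Module.rank ℂ (LinearMap.ker ((S ^ n : X →L[ℂ] X) : X →ₗ[ℂ] X)))
  set A := toNat α
  set B := toNat β
  have step : ∀ n : ℕ, k n + A ≤ k (n + 1) + B := by
    intro n
    have hc : Module.rank ℂ (LinearMap.ker ((S ^ n : X →L[ℂ] X) : X →ₗ[ℂ] X)) + α ≤
        Module.rank ℂ (LinearMap.ker ((S ^ (n + 1) : X →L[ℂ] X) : X →ₗ[ℂ] X)) + β := by
      calc Module.rank ℂ (LinearMap.ker ((S ^ n : X →L[ℂ] X) : X →ₗ[ℂ] X)) + α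
          ≤ (Module.rank ℂ ↥(LinearMap.ker ((S ^ n : X →L[ℂ] X) : X →ₗ[ℂ] X) ⊓ LinearMap.range (S : X →ₗ[ℂ] X)) + β) + α :=
            add_le_add (hineq n) le_rfl
        _ = (Module.rank ℂ ↥(LinearMap.ker ((S ^ n : X →L[ℂ] X) : X →ₗ[ℂ] X) ⊓ LinearMap.range (S : X →ₗ[ℂ] X)) + α) + β := by ring
        _ = Module.rank ℂ (LinearMap.ker ((S ^ (n + 1) : X →L[ℂ] X) : X →ₗ[ℂ] X)) + β := by rw [hstep n]
    have h1 : Module.rank ℂ (LinearMap.ker ((S ^ (n + 1) : X →L[ℂ] X) : X →ₗ[ℂ] X)) + β < ℵ₀ :=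
      add_lt_aleph0 (hfin _) hβ
    have h2 := toNat_le_toNat hc h1
    rwa [toNat_add (hfin n) hα, toNat_add (hfin _) hβ] at h2
  have growth : ∀ n : ℕ, n * A ≤ k n + n * B := by
    intro n
    induction n with
    | zero => simp
    | succ n ih =>
      have hs := step n
      calc (n + 1) * A = n * A + A := by ring
        _ ≤ (k n + n * B) + A := by omega
        _ ≤ (k (n + 1) + B) + n * B := by omega
        _ = k (n + 1) + (n + 1) * B := by ring
  by_contra hAB
  have hBA : B < A := by
    have hne : ¬ (α ≤ β) := hAB
    have h' : ¬ (A ≤ B) := by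
      intro hle
      apply hne
      calc α = (A : Cardinal) := (cast_toNat_of_lt_aleph0 hα).symm
        _ ≤ (B : Cardinal) := by exact_mod_cast hle
        _ = β := cast_toNat_of_lt_aleph0 hβ
    omega
  set n := p + k p + 1
  have hstabn : k n = k p := by
    show Cardinal.toNat _ = _
    rw [hp n (by omega)]
  have hg := growth n
  rw [hstabn] at hg
  have h2 : n * (B + 1) ≤ n * A := Nat.mul_le_mul_left n hBA
  have h3 : n * (B + 1) = n * B + n := by ring
  have hn : n = p + k p + 1 := rfl
  omega

lemma isClosed_sup_fd (M K : Submodule ℂ X) (hM : IsClosed (M : Set X))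
    [FiniteDimensional ℂ K] : IsClosed ((M ⊔ K : Submodule ℂ X) : Set X) := by
  haveI : IsClosed (M : Set X) := hM
  have hcont : Continuous M.mkQ :=
    AddMonoidHomClass.continuous_of_bound M.mkQ 1
      (fun x => by simpa using Submodule.Quotient.norm_mk_le M x)
  haveI : Module.Finite ℂ (K.map M.mkQ) := Module.Finite.map K M.mkQ
  have heq : ((M ⊔ K : Submodule ℂ X) : Set X) = M.mkQ ⁻¹' (K.map M.mkQ : Set (X ⧸ M)) := by
    rw [← Submodule.comap_map_mkQ M K]; rfl
  rw [heq]
  exact (Submodule.closed_of_finiteDimensional (K.map M.mkQ)).preimage hcont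

lemma isClosed_range_of_sup [CompleteSpace X] (S : X →L[ℂ] X) (K : Submodule ℂ X)
    [FiniteDimensional ℂ K]
    (hcl : IsClosed ((LinearMap.range (S : X →ₗ[ℂ] X) ⊔ K : Submodule ℂ X) : Set X)) :
    IsClosed (LinearMap.range (S : X →ₗ[ℂ] X) : Set X) := by
  set Z : Submodule ℂ X := LinearMap.range (S : X →ₗ[ℂ] X) ⊔ K with hZ
  haveI : CompleteSpace Z := hcl.completeSpace_coe
  haveI : CompleteSpace K := FiniteDimensional.complete ℂ K
  let Φ : X × K →L[ℂ] X :=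
    S.comp (ContinuousLinearMap.fst ℂ X K) + K.subtypeL.comp (ContinuousLinearMap.snd ℂ X K)
  have hΦ : ∀ v : X × K, Φ v = S v.1 + (v.2 : X) := fun v => rfl
  have hΦmem : ∀ v : X × K, Φ v ∈ Z := fun v => by
    rw [hΦ]
    exact Submodule.add_mem_sup (LinearMap.mem_range_self (S : X →ₗ[ℂ] X) v.1) v.2.2
  let Ψ := Φ.codRestrict Z hΦmem
  have hΨ : ∀ v : X × K, (Ψ v : X) = S v.1 + (v.2 : X) := fun v => rfl
  have hsurj : Function.Surjective Ψ := by
    rintro ⟨z, hz⟩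
    rw [Submodule.mem_sup] at hz
    obtain ⟨y, ⟨x, rfl⟩, kk, hk, rfl⟩ := hz
    exact ⟨(x, ⟨kk, hk⟩), Subtype.ext (hΨ _)⟩
  have hopen : IsOpenMap Ψ := Ψ.isOpenMap hsurj
  set C : Set Z := Subtype.val ⁻¹' (LinearMap.range (S : X →ₗ[ℂ] X) : Set X) with hCdef
  have hpre : Ψ ⁻¹' C = Prod.snd ⁻¹' {kk : K | (kk : X) ∈ LinearMap.range (S : X →ₗ[ℂ] X)} := by
    ext v
    simp only [Set.mem_preimage, hCdef, Set.mem_setOf_eq]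
    rw [hΨ]
    constructor
    · intro hmem
      have hsub : (S v.1 + (v.2 : X)) - S v.1 ∈ LinearMap.range (S : X →ₗ[ℂ] X) :=
        Submodule.sub_mem _ hmem (LinearMap.mem_range_self (S : X →ₗ[ℂ] X) v.1)
      simpa using hsub
    · intro hmem
      exact Submodule.add_mem _ (LinearMap.mem_range_self (S : X →ₗ[ℂ] X) v.1) hmem
  have hpreclosed : IsClosed (Ψ ⁻¹' C) := by
    rw [hpre]
    have h1 : IsClosed {kk : K | (kk : X) ∈ LinearMap.range (S : X →ₗ[ℂ] X)} := by
      have heq : {kk : K | (kk : X) ∈ LinearMap.range (S : X →ₗ[ℂ] X)} =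
          ((LinearMap.range (S : X →ₗ[ℂ] X)).comap K.subtype : Set K) := rfl
      rw [heq]
      exact Submodule.closed_of_finiteDimensional _
    exact h1.preimage continuous_snd
  have hC : IsClosed C := by
    rw [← isOpen_compl_iff]
    have himg : Cᶜ = Ψ '' (Ψ ⁻¹' Cᶜ) := (Set.image_preimage_eq _ hsurj).symm
    rw [himg, Set.preimage_compl]
    exact hopen _ hpreclosed.isOpen_compl
  have hfin : (LinearMap.range (S : X →ₗ[ℂ] X) : Set X) = Subtype.val '' C := by
    ext x
    constructor
    · intro hx
      exact ⟨⟨x, (le_sup_left : LinearMap.range (S : X →ₗ[ℂ] X) ≤ Z) hx⟩, hx, rfl⟩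
    · rintro ⟨⟨y, hy⟩, hC', rfl⟩
      exact hC'
  rw [hfin]
  exact hcl.isClosedEmbedding_subtypeVal.isClosedMap C hC

/-- A left Drazin invertible operator with finite-dimensional kernel is upper semi-Weyl. -/
lemma isUSW_of_isLD [CompleteSpace X] (S : X →L[ℂ] X) (hLD : OpSpec.isLD S)
    (hα : OpSpec.alpha S < ℵ₀) : OpSpec.isUSW S := by
  obtain ⟨p, hker, hclosed⟩ := hLD
  have hα' : Module.rank ℂ (LinearMap.ker (S : X →ₗ[ℂ] X)) < ℵ₀ := hα
  haveI hfinK : FiniteDimensional ℂ (LinearMap.ker ((S ^ p : X →L[ℂ] X) : X →ₗ[ℂ] X)) :=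
    Module.rank_lt_aleph0_iff.mp (rank_ker_pow_lt_aleph0 S hα' p)
  have hsub : ((LinearMap.range (S : X →ₗ[ℂ] X)).topologicalClosure : Submodule ℂ X) ≤
      LinearMap.range (S : X →ₗ[ℂ] X) ⊔ LinearMap.ker ((S ^ p : X →L[ℂ] X) : X →ₗ[ℂ] X) := by
    intro y hy
    have hy' : y ∈ closure (LinearMap.range (S : X →ₗ[ℂ] X) : Set X) := hy
    obtain ⟨u, hu, hulim⟩ := mem_closure_iff_seq_limit.mp hy'
    have hlim : Filter.Tendsto (fun n => (S ^ p) (u n)) Filter.atTop (nhds ((S ^ p) y)) :=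
      ((S ^ p).continuous.tendsto y).comp hulim
    have hmem : ∀ n, (S ^ p) (u n) ∈ (LinearMap.range ((S ^ (p + 1) : X →L[ℂ] X) : X →ₗ[ℂ] X) : Set X) := by
      intro n
      obtain ⟨x, hx⟩ := hu n
      exact ⟨x, by change S x = u n at hx; show (S ^ (p + 1)) x = (S ^ p) (u n); rw [pow_apply_add, pow_one, hx]⟩
    have hmemy : (S ^ p) y ∈ LinearMap.range ((S ^ (p + 1) : X →L[ℂ] X) : X →ₗ[ℂ] X) :=
      hclosed.mem_of_tendsto hlim (Filter.Eventually.of_forall hmem)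
    obtain ⟨w, hw⟩ := hmemy
    change (S ^ (p + 1)) w = (S ^ p) y at hw
    have h1 : y - S w ∈ LinearMap.ker ((S ^ p : X →L[ℂ] X) : X →ₗ[ℂ] X) := by
      show (S ^ p) (y - S w) = 0
      rw [map_sub]
      have hww : (S ^ p) (S w) = (S ^ (p + 1)) w := by rw [pow_apply_add, pow_one]
      rw [hww, hw, sub_self]
    have hdecomp : y = S w + (y - S w) := by abel
    rw [hdecomp]
    exact Submodule.add_mem_sup (LinearMap.mem_range_self (S : X →ₗ[ℂ] X) w) h1
  have hclosed2 : IsClosed ((LinearMap.range (S : X →ₗ[ℂ] X) ⊔ LinearMap.ker ((S ^ p : X →L[ℂ] X) : X →ₗ[ℂ] X) : Submodule ℂ X) : Set X) := by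
    have heq : LinearMap.range (S : X →ₗ[ℂ] X) ⊔ LinearMap.ker ((S ^ p : X →L[ℂ] X) : X →ₗ[ℂ] X) =
        (LinearMap.range (S : X →ₗ[ℂ] X)).topologicalClosure ⊔ LinearMap.ker ((S ^ p : X →L[ℂ] X) : X →ₗ[ℂ] X) :=
      le_antisymm (sup_le_sup_right (Submodule.le_topologicalClosure _) _)
        (sup_le hsub le_sup_right)
    rw [heq]
    exact isClosed_sup_fd _ _ (Submodule.isClosed_topologicalClosure _)
  have hRclosed : IsClosed (LinearMap.range (S : X →ₗ[ℂ] X) : Set X) :=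
    isClosed_range_of_sup S _ hclosed2
  refine ⟨hα, hRclosed, ?_⟩
  by_cases hβ : OpSpec.beta S < ℵ₀
  · exact alpha_le_beta_fin S (ker_stab S hker) hα' hβ
  · exact hα.le.trans (not_lt.mp hβ)

/-- a pole with finite-dimensional kernel is a left pole (left Drazin invertible). -/
lemma isLD_of_pole [CompleteSpace X] (S : X →L[ℂ] X)
    (h1 : OpSpec.finAsc S) (h2 : OpSpec.finDesc S) (hα : OpSpec.alpha S < ℵ₀) :
    OpSpec.isLD S := by
  obtain ⟨n₁, hk⟩ := h1
  obtain ⟨n₂, hr⟩ := h2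
  set p := max n₁ n₂ with hpdef
  have hkstab := ker_stab S hk
  have hkp : LinearMap.ker ((S ^ p : X →L[ℂ] X) : X →ₗ[ℂ] X) = LinearMap.ker ((S ^ (p + 1) : X →L[ℂ] X) : X →ₗ[ℂ] X) := by
    rw [hkstab p (le_max_left _ _), hkstab (p + 1) (by omega)]
  have hrstab := range_stab S hr
  have hrp : LinearMap.range ((S ^ (p + 1) : X →L[ℂ] X) : X →ₗ[ℂ] X) = LinearMap.range ((S ^ p : X →L[ℂ] X) : X →ₗ[ℂ] X) := by
    rw [hrstab (p + 1) (by omega), hrstab p (le_max_right _ _)]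
  have hα' : Module.rank ℂ (LinearMap.ker (S : X →ₗ[ℂ] X)) < ℵ₀ := hα
  haveI hfinK : FiniteDimensional ℂ (LinearMap.ker ((S ^ p : X →L[ℂ] X) : X →ₗ[ℂ] X)) :=
    Module.rank_lt_aleph0_iff.mp (rank_ker_pow_lt_aleph0 S hα' p)
  have htop : LinearMap.range ((S ^ (p + 1) : X →L[ℂ] X) : X →ₗ[ℂ] X) ⊔ LinearMap.ker ((S ^ p : X →L[ℂ] X) : X →ₗ[ℂ] X) = ⊤ := by
    rw [eq_top_iff]
    intro x _
    have hx : (S ^ p) x ∈ LinearMap.range ((S ^ (p + p) : X →L[ℂ] X) : X →ₗ[ℂ] X) := by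
      rw [hrstab (p + p) (by omega), ← hrstab p (le_max_right _ _)]
      exact ⟨x, rfl⟩
    obtain ⟨u, hu⟩ := hx
    change (S ^ (p + p)) u = (S ^ p) x at hu
    have hmem1 : (S ^ p) u ∈ LinearMap.range ((S ^ (p + 1) : X →L[ℂ] X) : X →ₗ[ℂ] X) := by
      rw [hrp]
      exact ⟨u, rfl⟩
    have hmem2 : x - (S ^ p) u ∈ LinearMap.ker ((S ^ p : X →L[ℂ] X) : X →ₗ[ℂ] X) := by
      show (S ^ p) (x - (S ^ p) u) = 0
      rw [map_sub, ← pow_apply_add, hu, sub_self]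
    have hdecomp : x = (S ^ p) u + (x - (S ^ p) u) := by abel
    rw [hdecomp]
    exact Submodule.add_mem_sup hmem1 hmem2
  have hclosed : IsClosed (LinearMap.range ((S ^ (p + 1) : X →L[ℂ] X) : X →ₗ[ℂ] X) : Set X) := by
    apply isClosed_range_of_sup (S ^ (p + 1)) (LinearMap.ker ((S ^ p : X →L[ℂ] X) : X →ₗ[ℂ] X))
    rw [htop]
    simpa using isClosed_univ
  exact ⟨p, hkp, hclosed⟩

end StmtAux

theorem stmt2 {X : Type*} [NormedAddCommGroup X] [NormedSpace ℂ X] [CompleteSpace X]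
    (hX : ¬ FiniteDimensional ℂ X) (T : X →L[ℂ] X)
    (h : propUWPi T) :
    poles0 T = poles T ∧ poles T = lpoles0 T := by
  have h' : specA T \ specUW T = poles T := h
  have key : ∀ l, l ∈ poles T → isUSW (T - l • 1) ∧ l ∈ specA T := by
    intro l hl
    rw [← h'] at hl
    obtain ⟨hA, hUW⟩ := hl
    have hUSW : isUSW (T - l • 1) := not_not.mp hUW
    exact ⟨hUSW, hA⟩
  constructor
  · ext l
    constructor
    · intro hl
      exact hl.1
    · intro hl
      exact ⟨hl, (key l hl).1.1⟩
  · ext l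
    constructor
    · intro hl
      obtain ⟨hUSW, hA⟩ := key l hl
      have hLD : isLD (T - l • 1) := StmtAux.isLD_of_pole _ hl.2.1 hl.2.2 hUSW.1
      exact ⟨⟨hA, hLD⟩, hUSW.1⟩
    · intro hl
      obtain ⟨⟨hA, hLD⟩, hα⟩ := hl
      have hUSW : isUSW (T - l • 1) := StmtAux.isUSW_of_isLD _ hLD hα
      have : l ∈ specA T \ specUW T := ⟨hA, fun hc => hc hUSW⟩
      rwa [h'] at this
end

section
/- Let T be the operator on ℓ²(ℕ) defined by T(x₁,x₂,x₃,…) = (x₂/2, x₃/3, x₄/4, …). Then σ_a(T) = σ_uw(T) = {0} = E(T) and Π(T) = ∅; consequently T satisfies property (UW_Π) but not property (UW_E). -/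
open OpSpec Cardinal

noncomputable abbrev ell2 : Type := lp (fun _ : ℕ => ℂ) 2


lemma norm_single' (i : ℕ) (a : ℂ) : ‖(lp.single 2 i a : ell2)‖ = ‖a‖ :=
  lp.norm_single (E := fun _ : ℕ => ℂ) (p := 2) (by norm_num) i a
instance : Nontrivial ell2 := ⟨lp.single 2 0 (1:ℂ), 0, by
  intro h
  have := norm_single' 0 1
  rw [h] at this; simp at this⟩
example : CompleteSpace ell2 := by infer_instance
example : NormOneClass (ell2 →L[ℂ] ell2) := by infer_instance

open Nat Finset in
/-- the product of weights -/
noncomputable def cw (n k : ℕ) : ℝ := ∏ j ∈ Finset.range n, ((k : ℝ) + (j : ℝ) + 2)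

open Nat in
lemma cw_pos (n k : ℕ) : 0 < cw n k :=
  Finset.prod_pos (fun j _ => by positivity)

lemma cw_succ (n k : ℕ) : cw (n+1) k = cw n k * ((k : ℝ) + (n : ℝ) + 2) :=
  Finset.prod_range_succ _ _

open Nat in
lemma cw_ge (n k : ℕ) : (n ! : ℝ) ≤ cw n k := by
  have : (((∏ j ∈ Finset.range n, (j+1)) : ℕ) : ℝ) ≤ cw n k := by
    push_cast
    refine Finset.prod_le_prod (fun j _ => by positivity) (fun j _ => by
      push_cast; linarith [Nat.cast_nonneg (α := ℝ) k])
  rwa [Finset.prod_range_add_one_eq_factorial] at this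

lemma pow_apply_cw (T : ell2 →L[ℂ] ell2)
    (hT : ∀ (x : ell2) (n : ℕ), T x n = x (n + 1) / ((n : ℂ) + 2)) :
    ∀ (n : ℕ) (x : ell2) (k : ℕ), (T ^ n) x k = x (k + n) / ((cw n k : ℝ) : ℂ) := by
  intro n
  induction n with
  | zero => intro x k; simp [cw]
  | succ n ih =>
    intro x k
    rw [pow_succ, ContinuousLinearMap.mul_apply, ih (T x) k, hT, cw_succ]
    push_cast
    rw [div_div]
    ring_nf

open Nat in
lemma pow_norm_le (T : ell2 →L[ℂ] ell2)
    (hT : ∀ (x : ell2) (n : ℕ), T x n = x (n + 1) / ((n : ℂ) + 2)) (n : ℕ) :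
    ‖T ^ n‖ ≤ ((n ! : ℝ))⁻¹ := by
  have hfac : (0:ℝ) < (n ! : ℝ) := by positivity
  refine ContinuousLinearMap.opNorm_le_bound _ (by positivity) (fun x => ?_)
  have h2 : (0:ℝ) < (2 : ENNReal).toReal := by norm_num
  have h2e : (2 : ENNReal).toReal = (2:ℝ) := by norm_num
  refine lp.norm_le_of_tsum_le h2 (by positivity) ?_
  simp only [h2e]
  have hnx : ∑' (i:ℕ), ‖x i‖ ^ (2:ℝ) = ‖x‖ ^ (2:ℝ) := by
    rw [show (2:ℝ) = (2:ENNReal).toReal from h2e.symm]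
    exact (lp.norm_rpow_eq_tsum h2 x).symm
  have hterm : ∀ k, ‖((T ^ n) x) k‖ ^ (2:ℝ) ≤
      ((n ! : ℝ))⁻¹ ^ (2:ℝ) * ‖x (k + n)‖ ^ (2:ℝ) := by
    intro k
    have hcoord : ‖((T ^ n) x) k‖ = ‖x (k + n)‖ / cw n k := by
      rw [pow_apply_cw T hT n x k, norm_div, Complex.norm_real, Real.norm_eq_abs,
        abs_of_pos (cw_pos n k)]
    rw [hcoord]
    have h1 : (1:ℝ) ≤ (↑n !)⁻¹ * cw n k := by
      rw [← div_eq_inv_mul, le_div_iff₀ hfac, one_mul]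
      exact cw_ge n k
    have hb : ‖x (k + n)‖ / cw n k ≤ ((n ! : ℝ))⁻¹ * ‖x (k + n)‖ := by
      rw [div_le_iff₀ (cw_pos n k), mul_comm ((n ! : ℝ))⁻¹, mul_assoc]
      nlinarith [norm_nonneg (x (k+n))]
    calc (‖x (k + n)‖ / cw n k) ^ (2:ℝ)
        ≤ (((n ! : ℝ))⁻¹ * ‖x (k + n)‖) ^ (2:ℝ) :=
          Real.rpow_le_rpow (div_nonneg (norm_nonneg _) (cw_pos n k).le) hb
            (by norm_num)
      _ = ((n ! : ℝ))⁻¹ ^ (2:ℝ) * ‖x (k + n)‖ ^ (2:ℝ) :=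
          Real.mul_rpow (by positivity) (norm_nonneg _)
  have hsum_x : Summable (fun k : ℕ => ‖x k‖ ^ (2:ℝ)) := by
    have := (lp.memℓp x).summable h2; simpa [h2e] using this
  have hinj : Function.Injective (fun k : ℕ => k + n) := add_left_injective n
  have hsum_shift : Summable (fun k : ℕ => ‖x (k + n)‖ ^ (2:ℝ)) :=
    hsum_x.comp_injective hinj
  have hsumL : Summable (fun k => ‖((T ^ n) x) k‖ ^ (2:ℝ)) := by
    have := (lp.memℓp ((T^n) x)).summable h2; simpa [h2e] using this
  calc ∑' k, ‖((T ^ n) x) k‖ ^ (2:ℝ)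
      ≤ ∑' k, ((n ! : ℝ))⁻¹ ^ (2:ℝ) * ‖x (k + n)‖ ^ (2:ℝ) :=
        Summable.tsum_le_tsum hterm hsumL (hsum_shift.mul_left _)
    _ = ((n ! : ℝ))⁻¹ ^ (2:ℝ) * ∑' k, ‖x (k + n)‖ ^ (2:ℝ) := tsum_mul_left
    _ ≤ ((n ! : ℝ))⁻¹ ^ (2:ℝ) * ∑' k, ‖x k‖ ^ (2:ℝ) := by
        refine mul_le_mul_of_nonneg_left ?_ (by positivity)
        exact Summable.tsum_le_tsum_of_inj _ hinj (fun c _ => by positivity)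
          (fun k => le_refl _) hsum_shift hsum_x
    _ ≤ (((n ! : ℝ))⁻¹ * ‖x‖) ^ (2:ℝ) := by
        rw [Real.mul_rpow (by positivity) (norm_nonneg _), hnx]

open Nat in
lemma spec_subset (T : ell2 →L[ℂ] ell2)
    (hT : ∀ (x : ell2) (n : ℕ), T x n = x (n + 1) / ((n : ℂ) + 2)) :
    spectrum ℂ T ⊆ {0} := by
  intro l hl
  by_contra hl0
  have hl0 : l ≠ 0 := hl0
  have hmem : ∀ n : ℕ, l ^ n ∈ spectrum ℂ (T ^ n) := by
    intro n
    have h1 := spectrum.subset_polynomial_aeval T (Polynomial.X ^ n : Polynomial ℂ)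
      (Set.mem_image_of_mem _ hl)
    simpa using h1
  have hle : ∀ n : ℕ, ‖l‖ ^ n ≤ ((n ! : ℝ))⁻¹ := fun n =>
    le_trans (by simpa using spectrum.norm_le_norm_of_mem (hmem n))
      (pow_norm_le T hT n)
  have hnl : 0 < ‖l‖ := norm_pos_iff.mpr hl0
  have htend := FloorSemiring.tendsto_pow_div_factorial_atTop (K := ℝ) ‖l‖⁻¹
  have hge : ∀ n : ℕ, (1:ℝ) ≤ ‖l‖⁻¹ ^ n / (n ! : ℝ) := by
    intro n
    have hfp : (0:ℝ) < (n ! : ℝ) := by positivity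
    have hpp : (0:ℝ) < ‖l‖ ^ n := pow_pos hnl n
    have hmul : (n ! : ℝ) * ‖l‖ ^ n ≤ 1 := by
      have := mul_le_mul_of_nonneg_left (hle n) hfp.le
      rwa [mul_inv_cancel₀ hfp.ne'] at this
    rw [le_div_iff₀ hfp, one_mul, inv_pow]
    nlinarith [mul_inv_cancel₀ hpp.ne', hmul]
  have hev := htend.eventually (gt_mem_nhds (by norm_num : (0:ℝ) < 1))
  obtain ⟨n, hn⟩ := hev.exists
  exact absurd (hge n) (not_le.mpr hn)

lemma isUnit_sub (T : ell2 →L[ℂ] ell2)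
    (hT : ∀ (x : ell2) (n : ℕ), T x n = x (n + 1) / ((n : ℂ) + 2))
    {l : ℂ} (hl : l ≠ 0) : IsUnit (T - l • (1 : ell2 →L[ℂ] ell2)) := by
  have hns : l ∉ spectrum ℂ T := fun h => hl (spec_subset T hT h)
  have hu : IsUnit (algebraMap ℂ (ell2 →L[ℂ] ell2) l - T) := by
    by_contra h; exact hns h
  have := hu.neg
  rwa [neg_sub, Algebra.algebraMap_eq_smul_one] at this

lemma bddBelow_of_isUnit (S : ell2 →L[ℂ] ell2) (h : IsUnit S) :
    ∃ c > 0, ∀ x : ell2, c * ‖x‖ ≤ ‖S x‖ := by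
  obtain ⟨u, hu⟩ := h
  set V : ell2 →L[ℂ] ell2 := ↑u⁻¹ with hV
  have hVS : ∀ x : ell2, V (S x) = x := by
    intro x
    have : (V * S) x = x := by
      rw [hV, ← hu, u.inv_mul]; rfl
    simpa [ContinuousLinearMap.mul_apply] using this
  have hVne : V ≠ 0 := by
    intro h0
    have := hVS (lp.single 2 0 (1:ℂ))
    rw [h0] at this
    simp only [ContinuousLinearMap.zero_apply] at this
    have h1 := norm_single' 0 (1:ℂ)
    rw [← this] at h1
    simp at h1
  have hVpos : 0 < ‖V‖ := norm_pos_iff.mpr hVne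
  refine ⟨‖V‖⁻¹, by positivity, fun x => ?_⟩
  rw [inv_mul_le_iff₀ hVpos]
  calc ‖x‖ = ‖V (S x)‖ := by rw [hVS]
    _ ≤ ‖V‖ * ‖S x‖ := V.le_opNorm _

lemma T_single (T : ell2 →L[ℂ] ell2)
    (hT : ∀ (x : ell2) (n : ℕ), T x n = x (n + 1) / ((n : ℂ) + 2)) (i : ℕ) (a : ℂ) :
    T (lp.single 2 (i+1) a) = lp.single 2 i (a / ((i : ℂ) + 2)) := by
  apply lp.ext
  funext k
  rw [hT]
  by_cases hk : k = i
  · subst hk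
    rw [lp.single_apply_self, lp.single_apply_self]
  · rw [lp.single_apply_ne _ _ _ hk, lp.single_apply_ne _ _ _ (by omega : k + 1 ≠ i + 1)]
    simp

lemma single_mem_range (T : ell2 →L[ℂ] ell2)
    (hT : ∀ (x : ell2) (n : ℕ), T x n = x (n + 1) / ((n : ℂ) + 2)) (i : ℕ) (a : ℂ) :
    (lp.single 2 i a : ell2) ∈ LinearMap.range (T : ell2 →ₗ[ℂ] ell2) := by
  have h2 : ((i : ℂ) + 2) ≠ 0 := by
    intro h
    have : ((i : ℝ) + 2) = 0 := by exact_mod_cast congrArg Complex.re h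
    nlinarith [Nat.cast_nonneg (α := ℝ) i]
  have : T (((i : ℂ) + 2) • lp.single 2 (i+1) a) = ((i : ℂ) + 2) • T (lp.single 2 (i+1) a) :=
    map_smul T _ _
  refine ⟨(((i : ℂ) + 2)) • lp.single 2 (i+1) a, ?_⟩
  rw [ContinuousLinearMap.coe_coe, this, T_single T hT, ← lp.single_smul]
  congr 1
  rw [smul_eq_mul]
  field_simp

/-- the element `y k = 1/(k+2)` of ℓ². -/
noncomputable def yel : ell2 :=
  ⟨fun k => ((k : ℂ) + 2)⁻¹, by
    apply memℓp_gen
    have hs : Summable (fun k : ℕ => (1:ℝ) / ((k : ℝ) + 2) ^ (2:ℕ)) := by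
      have h1 : Summable (fun k : ℕ => (1 : ℝ) / ((k:ℝ)) ^ (2:ℕ)) :=
        Real.summable_one_div_nat_pow.mpr (by norm_num)
      have := (summable_nat_add_iff (f := fun k : ℕ => (1 : ℝ) / ((k:ℝ)) ^ (2:ℕ)) 2).mpr h1
      refine this.congr (fun k => by push_cast; ring)
    refine hs.congr (fun k => ?_)
    have hnz : ((k : ℂ) + 2) ≠ 0 := by
      intro h
      have : ((k : ℝ) + 2) = 0 := by exact_mod_cast congrArg Complex.re h
      nlinarith [Nat.cast_nonneg (α := ℝ) k]
    have hnorm : ‖((k : ℂ) + 2)⁻¹‖ = (((k:ℝ) + 2))⁻¹ := by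
      rw [norm_inv]
      congr 1
      have : ((k : ℂ) + 2) = (((k : ℝ) + 2 : ℝ) : ℂ) := by push_cast; ring
      rw [this, Complex.norm_real, Real.norm_eq_abs,
        abs_of_pos (by positivity)]
    rw [show ((2:ENNReal).toReal) = (2:ℝ) by norm_num] at *
    rw [hnorm]
    rw [show ((1:ℝ) / ((k : ℝ) + 2) ^ (2:ℕ)) = ((((k:ℝ) + 2))⁻¹)^(2:ℕ) by
      rw [one_div, inv_pow]]
    rw [← Real.rpow_natCast ((((k:ℝ) + 2))⁻¹) 2]
    norm_num⟩

lemma yel_not_mem_range (T : ell2 →L[ℂ] ell2)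
    (hT : ∀ (x : ell2) (n : ℕ), T x n = x (n + 1) / ((n : ℂ) + 2)) :
    yel ∉ LinearMap.range (T : ell2 →ₗ[ℂ] ell2) := by
  rintro ⟨x, hx⟩
  have hx1 : ∀ k : ℕ, x (k + 1) = 1 := by
    intro k
    have h1 : T x k = ((k : ℂ) + 2)⁻¹ := by rw [show T x = yel from hx]; rfl
    rw [hT] at h1
    have hnz : ((k : ℂ) + 2) ≠ 0 := by
      intro h
      have : ((k : ℝ) + 2) = 0 := by exact_mod_cast congrArg Complex.re h
      nlinarith [Nat.cast_nonneg (α := ℝ) k]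
    field_simp at h1
    exact h1
  have hsum : Summable (fun k : ℕ => ‖x k‖ ^ (2 : ENNReal).toReal) :=
    (lp.memℓp x).summable (by norm_num)
  have htend := hsum.tendsto_atTop_zero.comp (Filter.tendsto_add_atTop_nat 1)
  have hconst : (fun k : ℕ => ‖x (k + 1)‖ ^ (2 : ENNReal).toReal) = fun _ => (1:ℝ) := by
    funext k
    rw [hx1 k]
    norm_num
  rw [show ((fun k : ℕ => ‖x k‖ ^ (2 : ENNReal).toReal) ∘ (fun k => k + 1))
      = fun k : ℕ => ‖x (k + 1)‖ ^ (2 : ENNReal).toReal from rfl, hconst] at htend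
  have := tendsto_nhds_unique htend tendsto_const_nhds
  norm_num at this

lemma range_not_closed (T : ell2 →L[ℂ] ell2)
    (hT : ∀ (x : ell2) (n : ℕ), T x n = x (n + 1) / ((n : ℂ) + 2)) :
    ¬ IsClosed (LinearMap.range (T : ell2 →ₗ[ℂ] ell2) : Set ell2) := by
  intro hcl
  apply yel_not_mem_range T hT
  have hdense : yel ∈ closure (LinearMap.range (T : ell2 →ₗ[ℂ] ell2) : Set ell2) := by
    have hsum := lp.hasSum_single (p := 2) (by norm_num) yel
    refine mem_closure_of_tendsto hsum (Filter.Eventually.of_forall (fun s => ?_))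
    have : ∑ i ∈ s, lp.single 2 i (yel i) ∈ LinearMap.range (T : ell2 →ₗ[ℂ] ell2) :=
      Submodule.sum_mem _ (fun i _ => single_mem_range T hT i (yel i))
    exact this
  rwa [hcl.closure_eq] at hdense

lemma pow_single_zero (T : ell2 →L[ℂ] ell2)
    (hT : ∀ (x : ell2) (n : ℕ), T x n = x (n + 1) / ((n : ℂ) + 2)) (n : ℕ) :
    (T ^ (n+1)) (lp.single 2 n (1:ℂ)) = 0 := by
  apply lp.ext
  funext k
  rw [pow_apply_cw T hT, lp.single_apply_ne _ _ _ (by omega : k + (n+1) ≠ n)]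
  simp

lemma pow_single_ne_zero (T : ell2 →L[ℂ] ell2)
    (hT : ∀ (x : ell2) (n : ℕ), T x n = x (n + 1) / ((n : ℂ) + 2)) (n : ℕ) :
    (T ^ n) (lp.single 2 n (1:ℂ)) ≠ 0 := by
  intro h
  have h0 : ((T ^ n) (lp.single 2 n (1:ℂ))) 0 = 0 := by rw [h]; rfl
  rw [pow_apply_cw T hT, show (0 + n) = n from Nat.zero_add n, lp.single_apply_self] at h0
  have hcwz : ((cw n 0 : ℝ) : ℂ) ≠ 0 := by
    exact_mod_cast (cw_pos n 0).ne'
  rw [div_eq_zero_iff] at h0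
  rcases h0 with h0 | h0
  · exact one_ne_zero h0
  · exact hcwz h0

lemma not_finAsc (T : ell2 →L[ℂ] ell2)
    (hT : ∀ (x : ell2) (n : ℕ), T x n = x (n + 1) / ((n : ℂ) + 2)) (n : ℕ) :
    LinearMap.ker ((T ^ n : ell2 →L[ℂ] ell2) : ell2 →ₗ[ℂ] ell2) ≠ LinearMap.ker ((T ^ (n + 1) : ell2 →L[ℂ] ell2) : ell2 →ₗ[ℂ] ell2) := by
  intro h
  have hmem : lp.single 2 n (1:ℂ) ∈ LinearMap.ker ((T ^ (n+1) : ell2 →L[ℂ] ell2) : ell2 →ₗ[ℂ] ell2) := pow_single_zero T hT n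
  rw [← h] at hmem
  exact pow_single_ne_zero T hT n hmem

lemma not_bddBelow (T : ell2 →L[ℂ] ell2)
    (hT : ∀ (x : ell2) (n : ℕ), T x n = x (n + 1) / ((n : ℂ) + 2)) :
    ¬ ∃ c > 0, ∀ x : ell2, c * ‖x‖ ≤ ‖T x‖ := by
  rintro ⟨c, hc, h⟩
  obtain ⟨n, hn⟩ := exists_nat_gt (1 / c)
  have h1 := h (lp.single 2 (n+1) (1:ℂ))
  rw [T_single T hT, norm_single', norm_single'] at h1
  have hnorm : ‖(1:ℂ) / ((n:ℂ) + 2)‖ = 1 / ((n:ℝ) + 2) := by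
    rw [norm_div, norm_one]
    congr 1
    have : ((n : ℂ) + 2) = (((n : ℝ) + 2 : ℝ) : ℂ) := by push_cast; ring
    rw [this, Complex.norm_real, Real.norm_eq_abs, abs_of_pos (by positivity)]
  rw [hnorm, norm_one, mul_one] at h1
  have hn2 : (0:ℝ) < (n:ℝ) + 2 := by positivity
  rw [le_div_iff₀ hn2] at h1
  have : (1:ℝ) / c < (n:ℝ) + 2 := by linarith [Nat.cast_nonneg (α := ℝ) n]
  rw [div_lt_iff₀ hc] at this
  nlinarith

open Nat in
theorem stmt4 (T : ell2 →L[ℂ] ell2)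
    (hT : ∀ (x : ell2) (n : ℕ), T x n = x (n + 1) / ((n : ℂ) + 2)) :
    specA T = {0} ∧ specUW T = {0} ∧ setE T = {0} ∧ poles T = ∅ ∧
      propUWPi T ∧ ¬ propUWE T := by
  have hT0 : T - (0:ℂ) • 1 = T := by rw [zero_smul, sub_zero]
  -- the spectrum is {0}
  have hspec : spec T = {0} := by
    refine subset_antisymm (spec_subset T hT) ?_
    obtain ⟨l, hl⟩ := spectrum.nonempty T
    have := spec_subset T hT hl
    rw [Set.mem_singleton_iff] at this
    subst this
    exact Set.singleton_subset_iff.mpr hl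
  -- unit facts
  have hunit_inj : ∀ {l : ℂ}, l ≠ 0 → Function.Injective (⇑(T - l • (1:ell2 →L[ℂ] ell2))) := by
    intro l hl
    obtain ⟨u, hu⟩ := isUnit_sub T hT hl
    intro a b hab
    have hV : ∀ x : ell2, (↑u⁻¹ : ell2 →L[ℂ] ell2) ((T - l • 1) x) = x := by
      intro x
      have : ((↑u⁻¹ : ell2 →L[ℂ] ell2) * (T - l • 1)) x = x := by
        rw [← hu, u.inv_mul]; rfl
      simpa [ContinuousLinearMap.mul_apply] using this
    rw [← hV a, ← hV b, hab]
  have hunit_surj : ∀ {l : ℂ}, l ≠ 0 → Function.Surjective (⇑(T - l • (1:ell2 →L[ℂ] ell2))) := by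
    intro l hl
    obtain ⟨u, hu⟩ := isUnit_sub T hT hl
    intro y
    refine ⟨(↑u⁻¹ : ell2 →L[ℂ] ell2) y, ?_⟩
    have : ((T - l • 1) * (↑u⁻¹ : ell2 →L[ℂ] ell2)) y = y := by
      rw [← hu, u.mul_inv]; rfl
    simpa [ContinuousLinearMap.mul_apply] using this
  -- σ_a(T) = {0}
  have hA : specA T = {0} := by
    ext l
    simp only [specA, Set.mem_setOf_eq, Set.mem_singleton_iff]
    constructor
    · intro h
      by_contra hl
      exact h (bddBelow_of_isUnit _ (isUnit_sub T hT hl))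
    · rintro rfl
      rw [hT0]
      exact not_bddBelow T hT
  -- σ_uw(T) = {0}
  have hUW : specUW T = {0} := by
    ext l
    simp only [specUW, Set.mem_setOf_eq, Set.mem_singleton_iff]
    constructor
    · intro h
      by_contra hl
      refine h ?_
      have hker : LinearMap.ker ((T - l • 1 : ell2 →L[ℂ] ell2) : ell2 →ₗ[ℂ] ell2) = ⊥ :=
        LinearMap.ker_eq_bot.mpr (hunit_inj hl)
      have hrange : LinearMap.range ((T - l • 1 : ell2 →L[ℂ] ell2) : ell2 →ₗ[ℂ] ell2) = ⊤ :=
        LinearMap.range_eq_top.mpr (hunit_surj hl)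
      have halpha : alpha (T - l • 1) = 0 := by
        rw [alpha, hker]
        exact rank_bot ℂ ell2
      refine ⟨?_, ?_, ?_⟩
      · rw [halpha]; exact Cardinal.aleph0_pos
      · rw [hrange]
        simp only [Submodule.top_coe]
        exact isClosed_univ
      · rw [halpha]; exact _root_.zero_le
    · rintro rfl
      rw [hT0]
      rintro ⟨-, hcl, -⟩
      exact range_not_closed T hT hcl
  -- E(T) = {0}
  have hP0 : (0:ℂ) ∈ specP T := by
    refine ⟨lp.single 2 0 (1:ℂ), ?_, ?_⟩
    · intro h
      have h1 := norm_single' 0 (1:ℂ)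
      rw [h] at h1
      simp at h1
    · rw [zero_smul]
      apply lp.ext
      funext k
      rw [hT, lp.single_apply_ne _ _ _ (by omega : k + 1 ≠ 0)]
      simp
  have hE : setE T = {0} := by
    ext l
    simp only [setE, Set.mem_inter_iff, Set.mem_singleton_iff]
    constructor
    · rintro ⟨⟨hl, -⟩, -⟩
      rw [hspec] at hl
      exact hl
    · rintro rfl
      refine ⟨⟨?_, Set.univ, Filter.univ_mem, ?_⟩, hP0⟩
      · rw [hspec]; rfl
      · rw [hspec, Set.univ_inter]
  -- Π(T) = ∅
  have hPi : poles T = ∅ := by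
    ext l
    simp only [poles, Set.mem_setOf_eq, Set.mem_empty_iff_false, iff_false, not_and]
    intro hl hasc
    rw [hspec, Set.mem_singleton_iff] at hl
    subst hl
    rw [hT0] at hasc
    obtain ⟨n, hn⟩ := hasc
    exact absurd hn (not_finAsc T hT n)
  refine ⟨hA, hUW, hE, hPi, ?_, ?_⟩
  · rw [propUWPi, hA, hUW, hPi, Set.diff_self]
  · rw [propUWE, hA, hUW, hE, Set.diff_self]
    intro h
    exact (h ▸ Set.mem_singleton (0:ℂ) : (0:ℂ) ∈ (∅ : Set ℂ))
end

section
/- Let R be the right shift on ℓ²(ℕ) and P the operator P(x₁,x₂,x₃,…) = (0,x₂,x₃,x₄,…) on ℓ²(ℕ), and set T = R ⊕ P on ℓ² ⊕ ℓ². Then σ_a(T) = C(0,1) ∪ {0}, σ_uw(T) = C(0,1), E_a(T) = {0}, and Π(T) = E(T) = ∅. Hence T satisfies property (UW_{E_a}) but satisfies neither (UW_Π) nor (UW_E). -/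
open OpSpec Cardinal

open scoped ENNReal NNReal

namespace Aux

lemma ell2_summable (f : ell2) : Summable (fun i => ‖f i‖ ^ (2:ℝ)) := by
  have := (lp.memℓp f).summable (p := 2) (by norm_num)
  simpa using this

lemma ell2_norm_rpow (f : ell2) : ‖f‖ ^ (2:ℝ) = ∑' i, ‖f i‖ ^ (2:ℝ) := by
  have := lp.norm_rpow_eq_tsum (p := 2) (by norm_num) f
  simpa using this

lemma ell2_norm_le_of_coord {f g : ell2} {c : ℝ} (hc : 0 ≤ c)
    (h : ∀ i, c * ‖f i‖ ≤ ‖g i‖) : c * ‖f‖ ≤ ‖g‖ := by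
  have h1 : (c * ‖f‖) ^ (2:ℝ) ≤ ‖g‖ ^ (2:ℝ) := by
    rw [Real.mul_rpow hc (norm_nonneg f), ell2_norm_rpow f, ell2_norm_rpow g,
      ← tsum_mul_left]
    refine Summable.tsum_le_tsum (fun i => ?_) ((ell2_summable f).mul_left _) (ell2_summable g)
    calc c ^ (2:ℝ) * ‖f i‖ ^ (2:ℝ) = (c * ‖f i‖) ^ (2:ℝ) := by
          rw [Real.mul_rpow hc (norm_nonneg _)]
      _ ≤ ‖g i‖ ^ (2:ℝ) := Real.rpow_le_rpow (by positivity) (h i) (by norm_num)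
  exact (Real.rpow_le_rpow_iff (by positivity) (norm_nonneg g) (by norm_num)).mp h1

/-- the zero'th coordinate eigenvector -/
noncomputable def e0 : ell2 := lp.single 2 0 1

lemma e0_apply_zero : e0 0 = 1 := lp.single_apply_self 2 0 1

lemma e0_apply_succ (n : ℕ) : e0 (n + 1) = 0 := lp.single_apply_ne 2 0 1 (by omega)

lemma e0_ne_zero : e0 ≠ 0 := by
  intro h
  have := e0_apply_zero
  rw [h] at this
  simp at this

/-- evaluation at a coordinate, as a linear map -/
noncomputable def evalL (i : ℕ) : ell2 →ₗ[ℂ] ℂ where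
  toFun f := f i
  map_add' f g := by simp
  map_smul' c f := by simp

@[simp] lemma evalL_apply (i : ℕ) (f : ell2) : evalL i f = f i := rfl

/-- evaluation at a coordinate, as a continuous linear map -/
noncomputable def evalCLM (i : ℕ) : ell2 →L[ℂ] ℂ :=
  LinearMap.mkContinuous (evalL i) 1 (fun f => by
    simpa using lp.norm_apply_le_norm (by norm_num : (2:ℝ≥0∞) ≠ 0) f i)

@[simp] lemma evalCLM_apply (i : ℕ) (f : ell2) : evalCLM i f = f i := rfl

/-- linear independence of the coordinate vectors -/
lemma single_indep : LinearIndependent ℂ (fun n : ℕ => (lp.single 2 n (1:ℂ) : ell2)) := by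
  rw [linearIndependent_iff']
  intro s g h i hi
  have := congrArg (evalL i) h
  rw [map_sum, map_zero] at this
  simp only [map_smul, evalL_apply, smul_eq_mul] at this
  rw [Finset.sum_eq_single i] at this
  · rw [lp.single_apply_self] at this
    simpa using this
  · intro b hb hbi
    rw [lp.single_apply_ne 2 b _ (Ne.symm hbi)]
    simp
  · intro h'
    exact absurd hi h'


section R
variable (R : ell2 →L[ℂ] ell2)
  (hR0 : ∀ x : ell2, R x 0 = 0) (hRs : ∀ (x : ell2) (n : ℕ), R x (n + 1) = x n)

include hR0 hRs in
lemma normR (x : ell2) : ‖R x‖ = ‖x‖ := by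
  have h1 : ‖R x‖ ^ (2:ℝ) = ‖x‖ ^ (2:ℝ) := by
    rw [ell2_norm_rpow, ell2_norm_rpow,
      Summable.tsum_eq_zero_add (ell2_summable (R x))]
    simp [hR0, hRs, Real.zero_rpow]
  exact Real.rpow_left_injOn (by norm_num : (2:ℝ) ≠ 0) (norm_nonneg _) (norm_nonneg _) h1

lemma Rl_apply (l : ℂ) (x : ell2) (i : ℕ) : ((R - l • 1) x) i = R x i - l * x i := by
  simp [ContinuousLinearMap.sub_apply, ContinuousLinearMap.smul_apply]
  rfl

include hR0 hRs in
lemma Rl_inj (l : ℂ) : Function.Injective (R - l • (1 : ell2 →L[ℂ] ell2)) := by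
  have key : ∀ x : ell2, (R - l • 1) x = 0 → x = 0 := by
    intro x hx
    have hc : ∀ i, R x i - l * x i = 0 := by
      intro i; rw [← Rl_apply, hx]; rfl
    by_cases hl : l = 0
    · subst hl
      apply lp.ext; funext n
      have := hc (n + 1)
      rw [hRs] at this
      simpa using this
    · have h0 : x 0 = 0 := by
        have := hc 0; rw [hR0] at this
        simpa using (mul_eq_zero.mp (by simpa using this)).resolve_left hl
      have hstep : ∀ n, x n = 0 → x (n + 1) = 0 := by
        intro n hn
        have := hc (n + 1); rw [hRs, hn] at this
        simpa [hl] using this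
      apply lp.ext; funext n
      induction n with
      | zero => exact h0
      | succ k ih => exact hstep k ih
  intro a b hab
  have : (R - l • 1) (a - b) = 0 := by rw [map_sub, hab, sub_self]
  exact sub_eq_zero.mp (key _ this)

include hR0 hRs in
lemma e0_not_mem_range (l : ℂ) (hl : ‖l‖ ≤ 1) :
    e0 ∉ LinearMap.range ((R - l • (1 : ell2 →L[ℂ] ell2)) : ell2 →ₗ[ℂ] ell2) := by
  rintro ⟨x, hx⟩
  have hc : ∀ i, R x i - l * x i = e0 i := by
    intro i; rw [← Rl_apply]; exact congrArg (fun f : ell2 => f i) hx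
  by_cases hl0 : l = 0
  · have := hc 0
    rw [hR0, e0_apply_zero, hl0] at this
    simp at this
  · -- x 0 = -1/l and x (n+1) = x n / l, so ‖x n‖ ≥ 1 for all n
    have h0 : l * x 0 = -1 := by
      have := hc 0; rw [hR0, e0_apply_zero] at this
      linear_combination -this
    have hstep : ∀ n, x n = l * x (n + 1) := by
      intro n
      have := hc (n + 1); rw [hRs, e0_apply_succ] at this
      linear_combination this
    have hln : (0:ℝ) < ‖l‖ := by simpa using norm_pos_iff.mpr hl0
    have hone : ∀ n, 1 ≤ ‖x n‖ := by
      intro n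
      induction n with
      | zero =>
        have : ‖l‖ * ‖x 0‖ = 1 := by rw [← norm_mul, h0]; simp
        nlinarith [norm_nonneg (x 0)]
      | succ k ih =>
        have : ‖x k‖ = ‖l‖ * ‖x (k + 1)‖ := by rw [← norm_mul, ← hstep]
        nlinarith [norm_nonneg (x (k+1))]
    -- but coordinates tend to 0
    have htend : Filter.Tendsto (fun n => ‖x n‖ ^ (2:ℝ)) Filter.atTop (nhds 0) :=
      (ell2_summable x).tendsto_atTop_zero
    have hev : ∀ᶠ n in Filter.atTop, ‖x n‖ ^ (2:ℝ) < 1 :=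
      htend.eventually (Filter.tendsto_id.eventually_lt_const (by norm_num))
    obtain ⟨n, hn⟩ := hev.exists
    have : (1:ℝ) ≤ ‖x n‖ ^ (2:ℝ) :=
      Real.one_le_rpow (hone n) (by norm_num)
    linarith

end R


section R2
variable (R : ell2 →L[ℂ] ell2)
  (hR0 : ∀ x : ell2, R x 0 = 0) (hRs : ∀ (x : ell2) (n : ℕ), R x (n + 1) = x n)

include hR0 hRs in
lemma Rl_bb_lt {l : ℂ} (hl : ‖l‖ < 1) :
    ∃ c > 0, ∀ x : ell2, c * ‖x‖ ≤ ‖(R - l • (1 : ell2 →L[ℂ] ell2)) x‖ := by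
  refine ⟨1 - ‖l‖, by linarith, fun x => ?_⟩
  have h1 : ‖(R - l • 1) x‖ = ‖R x - l • x‖ := by
    congr 1
  rw [h1]
  have h2 : ‖R x‖ - ‖l • x‖ ≤ ‖R x - l • x‖ := norm_sub_norm_le _ _
  rw [normR R hR0 hRs, norm_smul] at h2
  nlinarith [norm_nonneg x]

include hR0 hRs in
lemma Rl_not_bb {l : ℂ} (hl : ‖l‖ = 1) :
    ¬ ∃ c > 0, ∀ x : ell2, c * ‖x‖ ≤ ‖(R - l • (1 : ell2 →L[ℂ] ell2)) x‖ := by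
  rintro ⟨c, hc, hbb⟩
  have hl0 : l ≠ 0 := by intro h; rw [h] at hl; simp at hl
  set m : ℂ := (starRingEnd ℂ) l with hm
  have hlm : l * m = 1 := by
    rw [hm, Complex.mul_conj]
    norm_cast
    rw [Complex.normSq_eq_norm_sq]
    rw [hl]; norm_num
  have hmnorm : ‖m‖ = 1 := by rw [hm, RCLike.norm_conj, hl]
  -- pick N large
  obtain ⟨N₀, hN₀⟩ := exists_nat_gt ((2 / c) ^ (2:ℕ))
  set N := N₀ + 1 with hN
  have hNgt : ((2 / c) ^ (2:ℕ) : ℝ) < N := by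
    rw [hN]; push_cast; linarith
  set x : ell2 := ∑ k ∈ Finset.range N, lp.single 2 k (m ^ k) with hxdef
  have hxc : ∀ j, x j = if j < N then m ^ j else 0 := by
    intro j
    rw [hxdef]
    rw [lp.coeFn_sum]
    rw [Finset.sum_apply]
    by_cases hj : j < N
    · rw [Finset.sum_eq_single j]
      · rw [lp.single_apply_self, if_pos hj]
      · intro b _ hbj; exact lp.single_apply_ne 2 b _ (Ne.symm hbj)
      · intro h; exact absurd (Finset.mem_range.mpr hj) h
    · rw [if_neg hj, Finset.sum_eq_zero]
      intro b hb
      refine lp.single_apply_ne 2 b _ ?_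
      intro h; exact hj (h ▸ Finset.mem_range.mp hb)
  have hxnorm : ‖x‖ ^ (2:ℝ) = N := by
    rw [hxdef]
    have := lp.norm_sum_single (p := 2) (by norm_num) (fun k => (m ^ k : ℂ)) (Finset.range N)
    rw [show ((2:ℝ≥0∞).toReal) = (2:ℝ) by norm_num] at this
    rw [this]
    rw [Finset.sum_congr rfl (fun k _ => by
      rw [norm_pow, hmnorm, one_pow, Real.one_rpow])]
    simp
  -- the image
  have himg : (R - l • (1 : ell2 →L[ℂ] ell2)) x
      = lp.single 2 0 (-l) + lp.single 2 N (m ^ (N - 1)) := by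
    apply lp.ext; funext j
    have hcoord : ((R - l • (1 : ell2 →L[ℂ] ell2)) x) j = R x j - l * x j := Rl_apply R l x j
    have hrhs : (lp.single 2 0 (-l) + lp.single 2 N (m ^ (N - 1)) : ell2) j
        = (lp.single 2 0 (-l) : ell2) j + (lp.single 2 N (m ^ (N-1)) : ell2) j := by
      rw [lp.coeFn_add]; rfl
    rw [hcoord, hrhs]
    cases j with
    | zero =>
      rw [hR0, hxc 0, if_pos (by omega), lp.single_apply_self,
        lp.single_apply_ne 2 N _ (by omega : (0:ℕ) ≠ N)]
      ring
    | succ n =>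
      rw [hRs, hxc n, hxc (n+1), lp.single_apply_ne 2 0 _ (show n+1 ≠ 0 by omega)]
      rcases lt_trichotomy (n+1) N with h | h | h
      · rw [if_pos (show n < N by omega), if_pos h,
          lp.single_apply_ne 2 N _ (show n+1 ≠ N by omega)]
        linear_combination (-(m^(n:ℕ)) : ℂ) * hlm
      · rw [if_pos (show n < N by omega), if_neg (show ¬(n+1 < N) by omega), h,
          lp.single_apply_self, show N - 1 = n by omega]
        ring
      · rw [if_neg (show ¬(n < N) by omega), if_neg (show ¬(n+1 < N) by omega),
          lp.single_apply_ne 2 N _ (show n+1 ≠ N by omega)]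
        ring
  have himgnorm : ‖(R - l • (1 : ell2 →L[ℂ] ell2)) x‖ ≤ 2 := by
    rw [himg]
    refine (norm_add_le _ _).trans ?_
    have h1 : ‖(lp.single 2 0 (-l) : ell2)‖ = 1 := by
      have := lp.norm_single (E := fun _ : ℕ => ℂ) (p := 2) (by norm_num) 0 (-l : ℂ)
      rw [this, norm_neg, hl]
    have h2 : ‖(lp.single 2 N (m ^ (N-1)) : ell2)‖ = 1 := by
      have := lp.norm_single (E := fun _ : ℕ => ℂ) (p := 2) (by norm_num) N (m ^ (N-1) : ℂ)
      rw [this, norm_pow, hmnorm, one_pow]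
    rw [h1, h2]; norm_num
  have hb := hbb x
  have hsq : (c * ‖x‖) ^ (2:ℝ) ≤ 2 ^ (2:ℝ) :=
    Real.rpow_le_rpow (by positivity) (hb.trans himgnorm) (by norm_num)
  rw [Real.mul_rpow (le_of_lt hc) (norm_nonneg x), hxnorm] at hsq
  have h4 : (2:ℝ) ^ (2:ℝ) = 4 := by
    rw [show (2:ℝ) = ((2:ℕ):ℝ) by norm_num, Real.rpow_natCast]; norm_num
  have hc2 : c ^ (2:ℝ) = c ^ (2:ℕ) := Real.rpow_natCast c 2
  rw [h4, hc2] at hsq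
  have : ((2/c)^(2:ℕ) : ℝ) = 4 / c^(2:ℕ) := by
    field_simp
    ring
  rw [this] at hNgt
  have hcpos : (0:ℝ) < c ^ (2:ℕ) := by positivity
  have : (4:ℝ) < c^(2:ℕ) * N := by
    rw [div_lt_iff₀ hcpos] at hNgt
    linarith
  linarith

end R2


section P
variable (P : ell2 →L[ℂ] ell2)
  (hP0 : ∀ x : ell2, P x 0 = 0) (hPs : ∀ (x : ell2) (n : ℕ), P x (n + 1) = x (n + 1))

lemma Pl_apply (l : ℂ) (x : ell2) (i : ℕ) : ((P - l • 1) x) i = P x i - l * x i := by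
  simp [ContinuousLinearMap.sub_apply, ContinuousLinearMap.smul_apply]
  rfl

include hP0 hPs in
lemma normP_le (x : ell2) : ‖P x‖ ≤ ‖x‖ := by
  have := ell2_norm_le_of_coord (f := P x) (g := x) (c := 1) zero_le_one (fun i => by
    cases i with
    | zero => rw [hP0]; simp
    | succ n => rw [hPs]; simp)
  linarith

include hP0 hPs in
lemma Pl_bb {l : ℂ} (hl0 : l ≠ 0) (hl1 : l ≠ 1) :
    ∃ c > 0, ∀ x : ell2, c * ‖x‖ ≤ ‖(P - l • (1 : ell2 →L[ℂ] ell2)) x‖ := by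
  refine ⟨min ‖l‖ ‖1 - l‖, by
    apply lt_min <;> simpa [sub_eq_zero] using by first | exact hl0 | exact (Ne.symm hl1), fun x => ?_⟩
  apply ell2_norm_le_of_coord (le_min (norm_nonneg l) (norm_nonneg _))
  intro i
  rw [Pl_apply]
  cases i with
  | zero =>
    rw [hP0]
    calc min ‖l‖ ‖1-l‖ * ‖x 0‖ ≤ ‖l‖ * ‖x 0‖ := by
          apply mul_le_mul_of_nonneg_right (min_le_left _ _) (norm_nonneg _)
      _ = ‖0 - l * x 0‖ := by rw [zero_sub, norm_neg, norm_mul]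
  | succ n =>
    rw [hPs]
    calc min ‖l‖ ‖1-l‖ * ‖x (n+1)‖ ≤ ‖1-l‖ * ‖x (n+1)‖ := by
          apply mul_le_mul_of_nonneg_right (min_le_right _ _) (norm_nonneg _)
      _ = ‖x (n+1) - l * x (n+1)‖ := by rw [← norm_mul]; congr 1; ring

include hP0 hPs in
lemma Pl_inj {l : ℂ} (hl0 : l ≠ 0) (hl1 : l ≠ 1) :
    Function.Injective (P - l • (1 : ell2 →L[ℂ] ell2)) := by
  obtain ⟨c, hc, hbb⟩ := Pl_bb P hP0 hPs hl0 hl1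
  intro a b hab
  have h0 : (P - l • 1) (a - b) = 0 := by rw [map_sub, hab, sub_self]
  have := hbb (a - b)
  rw [h0, norm_zero] at this
  have : ‖a - b‖ ≤ 0 := by nlinarith [norm_nonneg (a - b)]
  have : a - b = 0 := by
    rw [← norm_le_zero_iff]; exact this
  exact sub_eq_zero.mp this

include hP0 hPs in
lemma P_eigen0 : P e0 = 0 := by
  apply lp.ext; funext j
  cases j with
  | zero => rw [hP0]; rfl
  | succ n => rw [hPs, e0_apply_succ]; rfl

include hP0 hPs in
lemma P_fix {y : ell2} (hy : y 0 = 0) : P y = y := by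
  apply lp.ext; funext j
  cases j with
  | zero => rw [hP0, hy]
  | succ n => rw [hPs]

end P

section Banach
variable {X : Type*} [NormedAddCommGroup X] [NormedSpace ℂ X] [CompleteSpace X]
variable {S : X →L[ℂ] X}

lemma bb_antilipschitz (h : boundedBelow S) :
    ∃ K : ℝ≥0, AntilipschitzWith K S := by
  obtain ⟨c, hc, hb⟩ := h
  refine ⟨Real.toNNReal c⁻¹, S.antilipschitz_of_bound (fun x => ?_)⟩
  rw [Real.coe_toNNReal _ (by positivity)]
  have := hb x
  rw [inv_mul_eq_div, le_div_iff₀ hc]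
  linarith

lemma bb_inj (h : boundedBelow S) : Function.Injective S := by
  obtain ⟨K, hK⟩ := bb_antilipschitz h
  exact hK.injective

lemma bb_closedRange (h : boundedBelow S) : IsClosed (LinearMap.range (S : X →ₗ[ℂ] X) : Set X) := by
  obtain ⟨K, hK⟩ := bb_antilipschitz h
  have := hK.isClosed_range S.uniformContinuous
  rwa [LinearMap.coe_range]

lemma bb_isUSW (h : boundedBelow S) : isUSW S := by
  have hker : LinearMap.ker (S : X →ₗ[ℂ] X) = ⊥ := LinearMap.ker_eq_bot.mpr (bb_inj h)
  have halpha : alpha S = 0 := by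
    rw [alpha, hker, rank_bot]
  refine ⟨?_, bb_closedRange h, ?_⟩
  · rw [halpha]; exact Cardinal.aleph0_pos
  · rw [halpha]; exact zero_le

lemma bb_of_inj_closedRange (hinj : Function.Injective S)
    (hcl : IsClosed (LinearMap.range (S : X →ₗ[ℂ] X) : Set X)) : boundedBelow S := by
  set M := LinearMap.range (S : X →ₗ[ℂ] X) with hM
  haveI : CompleteSpace M := hcl.completeSpace_coe
  set Scd : X →L[ℂ] M := S.codRestrict M (fun x => LinearMap.mem_range_self _ x) with hScd
  have hker : LinearMap.ker (Scd : X →ₗ[ℂ] M) = ⊥ := by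
    rw [LinearMap.ker_eq_bot]
    intro a b hab
    apply hinj
    have : (Scd a : X) = (Scd b : X) := congrArg Subtype.val hab
    exact this
  have hrange : LinearMap.range (Scd : X →ₗ[ℂ] M) = ⊤ := by
    rw [LinearMap.range_eq_top]
    rintro ⟨y, x, rfl⟩
    exact ⟨x, rfl⟩
  set e := ContinuousLinearEquiv.ofBijective Scd hker hrange with he
  obtain ⟨K, hK⟩ : ∃ K : ℝ≥0, AntilipschitzWith K e := ⟨_, e.antilipschitz⟩
  refine ⟨((K : ℝ) + 1)⁻¹, by positivity, fun x => ?_⟩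
  have h1 : ‖x‖ ≤ K * ‖e x‖ := by
    have := hK.le_mul_dist x 0
    simpa [dist_eq_norm] using this
  have h2 : ‖e x‖ = ‖S x‖ := by
    have : ((e x : M) : X) = S x := rfl
    rw [← this]
    rfl
  rw [h2] at h1
  have hK1 : (K:ℝ) ≤ (K:ℝ) + 1 := by linarith
  have : ‖x‖ ≤ ((K:ℝ) + 1) * ‖S x‖ :=
    h1.trans (mul_le_mul_of_nonneg_right hK1 (norm_nonneg _))
  rw [inv_mul_le_iff₀ (by positivity)]
  linarith

end Banach


section T
variable (R P : ell2 →L[ℂ] ell2)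
    (hR0 : ∀ x : ell2, R x 0 = 0) (hRs : ∀ (x : ell2) (n : ℕ), R x (n + 1) = x n)
    (hP0 : ∀ x : ell2, P x 0 = 0) (hPs : ∀ (x : ell2) (n : ℕ), P x (n + 1) = x (n + 1))
    (T : ell2 × ell2 →L[ℂ] ell2 × ell2) (hT : ∀ v : ell2 × ell2, T v = (R v.1, P v.2))

include hT in
lemma Tl_apply (l : ℂ) (v : ell2 × ell2) :
    (T - l • (1 : ell2 × ell2 →L[ℂ] ell2 × ell2)) v
      = ((R - l • 1) v.1, (P - l • 1) v.2) := by
  simp only [ContinuousLinearMap.sub_apply, ContinuousLinearMap.smul_apply,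
    ContinuousLinearMap.one_apply, hT]
  rfl

include hT in
lemma Tl_pow (l : ℂ) (n : ℕ) (v : ell2 × ell2) :
    ((T - l • (1 : ell2 × ell2 →L[ℂ] ell2 × ell2)) ^ n) v
      = (((R - l • 1) ^ n) v.1, ((P - l • 1) ^ n) v.2) := by
  induction n generalizing v with
  | zero => simp [ContinuousLinearMap.one_apply]
  | succ k ih =>
    rw [pow_succ, pow_succ, pow_succ]
    rw [ContinuousLinearMap.mul_apply, ContinuousLinearMap.mul_apply,
      ContinuousLinearMap.mul_apply]
    rw [Tl_apply R P T hT]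
    rw [ih]

include hR0 hRs hP0 hPs hT in
lemma T_norm_le (v : ell2 × ell2) : ‖T v‖ ≤ ‖v‖ := by
  rw [hT, Prod.norm_def, Prod.norm_def]
  apply max_le_max
  · rw [normR R hR0 hRs]
  · exact normP_le P hP0 hPs v.2

include hT in
lemma bb_prod {l : ℂ}
    (h1 : ∃ c > 0, ∀ x : ell2, c * ‖x‖ ≤ ‖(R - l • (1 : ell2 →L[ℂ] ell2)) x‖)
    (h2 : ∃ c > 0, ∀ x : ell2, c * ‖x‖ ≤ ‖(P - l • (1 : ell2 →L[ℂ] ell2)) x‖) :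
    boundedBelow (T - l • 1) := by
  obtain ⟨c1, hc1, hb1⟩ := h1
  obtain ⟨c2, hc2, hb2⟩ := h2
  refine ⟨min c1 c2, lt_min hc1 hc2, fun v => ?_⟩
  rw [Tl_apply R P T hT, Prod.norm_def, Prod.norm_def]
  dsimp only
  rw [mul_max_of_nonneg _ _ (le_of_lt (lt_min hc1 hc2))]
  apply max_le
  · calc min c1 c2 * ‖v.1‖ ≤ c1 * ‖v.1‖ :=
        mul_le_mul_of_nonneg_right (min_le_left _ _) (norm_nonneg _)
      _ ≤ ‖(R - l • 1) v.1‖ := hb1 v.1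
      _ ≤ _ := le_max_left _ _
  · calc min c1 c2 * ‖v.2‖ ≤ c2 * ‖v.2‖ :=
        mul_le_mul_of_nonneg_right (min_le_right _ _) (norm_nonneg _)
      _ ≤ ‖(P - l • 1) v.2‖ := hb2 v.2
      _ ≤ _ := le_max_right _ _

include hT in
lemma bb_fst {l : ℂ} (h : boundedBelow (T - l • 1)) :
    ∃ c > 0, ∀ x : ell2, c * ‖x‖ ≤ ‖(R - l • (1 : ell2 →L[ℂ] ell2)) x‖ := by
  obtain ⟨c, hc, hb⟩ := h
  refine ⟨c, hc, fun x => ?_⟩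
  have := hb (x, 0)
  rw [Tl_apply R P T hT, Prod.norm_def, Prod.norm_def] at this
  dsimp only at this
  rw [map_zero, norm_zero, max_eq_left (norm_nonneg _), max_eq_left (norm_nonneg _)] at this
  exact this

include hT in
lemma bb_snd {l : ℂ} (h : boundedBelow (T - l • 1)) :
    ∃ c > 0, ∀ x : ell2, c * ‖x‖ ≤ ‖(P - l • (1 : ell2 →L[ℂ] ell2)) x‖ := by
  obtain ⟨c, hc, hb⟩ := h
  refine ⟨c, hc, fun x => ?_⟩
  have := hb (0, x)
  rw [Tl_apply R P T hT, Prod.norm_def, Prod.norm_def] at this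
  dsimp only at this
  rw [map_zero, norm_zero, max_eq_right (norm_nonneg _), max_eq_right (norm_nonneg _)] at this
  exact this

include hR0 hRs hP0 hPs hT in
lemma Tl_inj {l : ℂ} (hl0 : l ≠ 0) (hl1 : l ≠ 1) :
    Function.Injective (T - l • (1 : ell2 × ell2 →L[ℂ] ell2 × ell2)) := by
  intro a b hab
  rw [Tl_apply R P T hT, Tl_apply R P T hT, Prod.mk.injEq] at hab
  exact Prod.ext (Rl_inj R hR0 hRs l hab.1) (Pl_inj P hP0 hPs hl0 hl1 hab.2)

end T


section T2
variable (R P : ell2 →L[ℂ] ell2)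
    (hR0 : ∀ x : ell2, R x 0 = 0) (hRs : ∀ (x : ell2) (n : ℕ), R x (n + 1) = x n)
    (hP0 : ∀ x : ell2, P x 0 = 0) (hPs : ∀ (x : ell2) (n : ℕ), P x (n + 1) = x (n + 1))
    (T : ell2 × ell2 →L[ℂ] ell2 × ell2) (hT : ∀ v : ell2 × ell2, T v = (R v.1, P v.2))

include hR0 hRs in
lemma R_inj : Function.Injective R := by
  have := Rl_inj R hR0 hRs 0
  simpa using this

include hR0 hRs hP0 hPs hT in
lemma alpha_T_le_one : alpha T ≤ 1 := by
  set φ : ↥(LinearMap.ker (T : ell2 × ell2 →ₗ[ℂ] ell2 × ell2)) →ₗ[ℂ] ℂ :=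
    (evalL 0).comp ((LinearMap.snd ℂ ell2 ell2).comp (Submodule.subtype _)) with hφ
  have hinj : Function.Injective φ := by
    intro a b hab
    have ha := a.2
    have hb := b.2
    rw [LinearMap.mem_ker] at ha hb
    apply Subtype.ext
    have key : ∀ w : ell2 × ell2, T w = 0 → (w.2 : ell2) 0 = 0 → w = 0 := by
      intro w hw hw2
      rw [hT] at hw
      have hw1 : R w.1 = 0 := congrArg Prod.fst hw
      have hw2' : P w.2 = 0 := congrArg Prod.snd hw
      have h1 : w.1 = 0 := R_inj R hR0 hRs (by rw [hw1, map_zero])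
      have h2 : w.2 = 0 := by
        apply lp.ext; funext j
        cases j with
        | zero => exact hw2
        | succ n =>
          have := congrArg (fun f : ell2 => (f : ℕ → ℂ) (n+1)) hw2'
          simp only at this
          rw [hPs] at this
          simpa using this
      exact Prod.ext h1 h2
    have hd : T ((a:ell2 × ell2) - b) = 0 := by rw [map_sub, show T a = 0 from ha, show T b = 0 from hb, sub_self]
    have hd2 : (((a:ell2 × ell2) - b).2 : ell2) 0 = 0 := by
      have : (((a:ell2 × ell2) - b).2 : ell2) 0 = ((a:ell2 × ell2).2 : ell2) 0
          - ((b:ell2 × ell2).2 : ell2) 0 := by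
        rw [Prod.snd_sub, lp.coeFn_sub]; rfl
      rw [this]
      have h3 : ((a : ell2 × ell2).2 : ℕ → ℂ) 0 = ((b : ell2 × ell2).2 : ℕ → ℂ) 0 := hab
      rw [h3]; ring
    have := key _ hd hd2
    exact sub_eq_zero.mp this
  calc alpha T ≤ Module.rank ℂ ℂ := LinearMap.rank_le_of_injective φ hinj
    _ = 1 := Module.rank_self ℂ

include hR0 hRs in
lemma R_shift_surj (u : ell2) (hu : u 0 = 0) : ∃ x : ell2, R x = u := by
  have hmem : Memℓp (fun n => u (n+1)) 2 := by
    apply memℓp_gen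
    have : Summable (fun n => ‖u (n+1)‖ ^ (2:ℝ)) :=
      (summable_nat_add_iff 1).mpr (ell2_summable u)
    simpa using this
  refine ⟨⟨fun n => u (n+1), hmem⟩, ?_⟩
  apply lp.ext; funext j
  cases j with
  | zero => rw [hR0]; exact hu.symm
  | succ n => rw [hRs]

include hR0 hRs hP0 hPs hT in
lemma range_T_eq : (LinearMap.range (T : ell2 × ell2 →ₗ[ℂ] ell2 × ell2) : Set (ell2 × ell2))
    = {w : ell2 × ell2 | (w.1 : ell2) 0 = 0} ∩ {w : ell2 × ell2 | (w.2 : ell2) 0 = 0} := by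
  ext w
  constructor
  · rintro ⟨v, rfl⟩
    change T v ∈ _
    rw [hT]
    exact ⟨hR0 v.1, hP0 v.2⟩
  · rintro ⟨h1, h2⟩
    obtain ⟨x, hx⟩ := R_shift_surj R hR0 hRs w.1 h1
    refine ⟨(x, w.2), ?_⟩
    change T (x, w.2) = w
    rw [hT]
    exact Prod.ext hx (P_fix P hP0 hPs h2)

include hR0 hRs hP0 hPs hT in
lemma range_T_closed : IsClosed (LinearMap.range (T : ell2 × ell2 →ₗ[ℂ] ell2 × ell2) : Set (ell2 × ell2)) := by
  rw [range_T_eq R P hR0 hRs hP0 hPs T hT]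
  apply IsClosed.inter
  · have : {w : ell2 × ell2 | (w.1 : ell2) 0 = 0}
        = ((evalCLM 0).comp (ContinuousLinearMap.fst ℂ ell2 ell2)) ⁻¹' {0} := by
      ext w; simp
    rw [this]
    exact isClosed_singleton.preimage (ContinuousLinearMap.continuous _)
  · have : {w : ell2 × ell2 | (w.2 : ell2) 0 = 0}
        = ((evalCLM 0).comp (ContinuousLinearMap.snd ℂ ell2 ell2)) ⁻¹' {0} := by
      ext w; simp
    rw [this]
    exact isClosed_singleton.preimage (ContinuousLinearMap.continuous _)

include hR0 hRs hP0 hPs hT in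
lemma beta_T_pos : 1 ≤ beta T := by
  have hmem : (e0, (0:ell2)) ∉ LinearMap.range (T : ell2 × ell2 →ₗ[ℂ] ell2 × ell2) := by
    intro hmem
    rw [← SetLike.mem_coe, range_T_eq R P hR0 hRs hP0 hPs T hT] at hmem
    have := hmem.1
    simp only [Set.mem_setOf_eq] at this
    rw [e0_apply_zero] at this
    exact one_ne_zero this
  have hne : (Submodule.Quotient.mk (e0, (0:ell2))
      : (ell2 × ell2) ⧸ LinearMap.range (T : ell2 × ell2 →ₗ[ℂ] ell2 × ell2)) ≠ 0 := by
    intro h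
    exact hmem ((Submodule.Quotient.mk_eq_zero _).mp h)
  haveI : Nontrivial ((ell2 × ell2) ⧸ LinearMap.range (T : ell2 × ell2 →ₗ[ℂ] ell2 × ell2)) :=
    ⟨_, 0, hne⟩
  rw [beta]
  exact Cardinal.one_le_iff_pos.mpr (rank_pos_iff_nontrivial.mpr inferInstance)

include hR0 hRs hP0 hPs hT in
lemma isUSW_T0 : isUSW (T - (0:ℂ) • 1) := by
  have hTeq : T - (0:ℂ) • 1 = T := by simp
  rw [hTeq]
  refine ⟨lt_of_le_of_lt (alpha_T_le_one R P hR0 hRs hP0 hPs T hT) Cardinal.one_lt_aleph0,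
    range_T_closed R P hR0 hRs hP0 hPs T hT,
    le_trans (alpha_T_le_one R P hR0 hRs hP0 hPs T hT) (beta_T_pos R P hR0 hRs hP0 hPs T hT)⟩

include hP0 hPs hT in
lemma alpha_T1_infinite : ¬ (alpha (T - (1:ℂ) • 1) < Cardinal.aleph0) := by
  set K := LinearMap.ker ((T - (1:ℂ) • (1 : ell2 × ell2 →L[ℂ] ell2 × ell2)) : ell2 × ell2 →ₗ[ℂ] ell2 × ell2) with hK
  have hmem : ∀ n : ℕ, ((0:ell2), (lp.single 2 (n+1) (1:ℂ) : ell2)) ∈ K := by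
    intro n
    rw [hK, LinearMap.mem_ker]
    change (T - (1:ℂ) • (1 : ell2 × ell2 →L[ℂ] ell2 × ell2)) _ = 0
    rw [Tl_apply R P T hT]
    have h2 : (P - (1:ℂ) • 1) (lp.single 2 (n+1) (1:ℂ) : ell2) = 0 := by
      have hfix : P (lp.single 2 (n+1) (1:ℂ) : ell2) = lp.single 2 (n+1) (1:ℂ) :=
        P_fix P hP0 hPs (lp.single_apply_ne 2 (n+1) _ (by omega))
      rw [ContinuousLinearMap.sub_apply, hfix]
      simp
    rw [map_zero, h2]
    rfl
  set v : ℕ → ↥K := fun n => ⟨_, hmem n⟩ with hv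
  have hindep : LinearIndependent ℂ v := by
    apply LinearIndependent.of_comp (K.subtype)
    have hcomp : (K.subtype) ∘ v
        = fun n : ℕ => ((0:ell2), (lp.single 2 (n+1) (1:ℂ) : ell2)) := rfl
    rw [hcomp]
    apply LinearIndependent.of_comp (LinearMap.snd ℂ ell2 ell2)
    have hcomp2 : (LinearMap.snd ℂ ell2 ell2)
        ∘ (fun n : ℕ => ((0:ell2), (lp.single 2 (n+1) (1:ℂ) : ell2)))
        = (fun n : ℕ => (lp.single 2 n (1:ℂ) : ell2)) ∘ (fun n => n + 1) := rfl
    rw [hcomp2]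
    exact single_indep.comp _ (fun a b h => by omega)
  have hle : Cardinal.aleph0 ≤ alpha (T - (1:ℂ) • 1) := by
    have := hindep.cardinal_le_rank
    rwa [Cardinal.mk_nat] at this
  exact not_lt.mpr hle

end T2


section T3
variable (R P : ell2 →L[ℂ] ell2)
    (hR0 : ∀ x : ell2, R x 0 = 0) (hRs : ∀ (x : ell2) (n : ℕ), R x (n + 1) = x n)
    (hP0 : ∀ x : ell2, P x 0 = 0) (hPs : ∀ (x : ell2) (n : ℕ), P x (n + 1) = x (n + 1))
    (T : ell2 × ell2 →L[ℂ] ell2 × ell2) (hT : ∀ v : ell2 × ell2, T v = (R v.1, P v.2))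

lemma e0_norm : ‖e0‖ = 1 := by
  have := lp.norm_single (E := fun _ : ℕ => ℂ) (p := 2) (by norm_num) 0 (1:ℂ)
  rw [e0, this, norm_one]

include hR0 hRs hP0 hPs hT in
lemma T_not_bb_zero : ¬ boundedBelow (T - (0:ℂ) • 1) := by
  rintro ⟨c, hc, hb⟩
  have hTeq : T - (0:ℂ) • 1 = T := by simp
  rw [hTeq] at hb
  have key : T ((0:ell2), e0) = 0 := by
    rw [hT]
    have : P e0 = 0 := P_eigen0 P hP0 hPs
    simp [this]
  have := hb ((0:ell2), e0)
  rw [key, norm_zero, Prod.norm_def] at this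
  simp only [norm_zero, e0_norm] at this
  have h1 : max (0:ℝ) 1 = 1 := by norm_num
  rw [h1] at this
  nlinarith

include hR0 hRs hP0 hPs hT in
lemma specA_T : specA T = Metric.sphere (0:ℂ) 1 ∪ {0} := by
  ext l
  simp only [specA, Set.mem_setOf_eq, Set.mem_union, mem_sphere_zero_iff_norm,
    Set.mem_singleton_iff]
  constructor
  · intro hnb
    by_contra hcon
    push_neg at hcon
    obtain ⟨hn1, hn0⟩ := hcon
    rcases lt_or_gt_of_ne hn1 with hlt | hgt
    · apply hnb
      apply bb_prod R P T hT (Rl_bb_lt R hR0 hRs hlt)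
      apply Pl_bb P hP0 hPs hn0
      intro h1
      rw [h1] at hlt
      simp at hlt
    · apply hnb
      refine ⟨‖l‖ - 1, by linarith, fun v => ?_⟩
      have happ : (T - l • (1 : ell2 × ell2 →L[ℂ] ell2 × ell2)) v = T v - l • v := by
        simp [ContinuousLinearMap.sub_apply]
      rw [happ]
      have h2 : ‖l • v‖ - ‖T v‖ ≤ ‖T v - l • v‖ := by
        rw [norm_sub_rev]
        exact norm_sub_norm_le _ _
      rw [norm_smul] at h2
      have h3 := T_norm_le R P hR0 hRs hP0 hPs T hT v
      nlinarith [norm_nonneg v]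
  · rintro (hl | rfl)
    · intro hbb
      exact Rl_not_bb R hR0 hRs hl (bb_fst R P T hT hbb)
    · exact T_not_bb_zero R P hR0 hRs hP0 hPs T hT

include hR0 hRs hP0 hPs hT in
lemma specUW_T : specUW T = Metric.sphere (0:ℂ) 1 := by
  ext l
  simp only [specUW, Set.mem_setOf_eq, mem_sphere_zero_iff_norm]
  constructor
  · intro hn
    by_contra hl1
    apply hn
    by_cases hl0 : l = 0
    · rw [hl0]; exact isUSW_T0 R P hR0 hRs hP0 hPs T hT
    · apply bb_isUSW
      rcases lt_or_gt_of_ne hl1 with hlt | hgt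
      · apply bb_prod R P T hT (Rl_bb_lt R hR0 hRs hlt)
        apply Pl_bb P hP0 hPs hl0
        intro h1
        rw [h1] at hlt
        simp at hlt
      · refine ⟨‖l‖ - 1, by linarith, fun v => ?_⟩
        have happ : (T - l • (1 : ell2 × ell2 →L[ℂ] ell2 × ell2)) v = T v - l • v := by
          simp [ContinuousLinearMap.sub_apply]
        rw [happ]
        have h2 : ‖l • v‖ - ‖T v‖ ≤ ‖T v - l • v‖ := by
          rw [norm_sub_rev]
          exact norm_sub_norm_le _ _
        rw [norm_smul] at h2
        have h3 := T_norm_le R P hR0 hRs hP0 hPs T hT v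
        nlinarith [norm_nonneg v]
  · intro hl hUSW
    by_cases hl1 : l = 1
    · rw [hl1] at hUSW
      exact alpha_T1_infinite R P hP0 hPs T hT hUSW.1
    · have hl0 : l ≠ 0 := by
        intro h; rw [h] at hl; simp at hl
      have hinj := Tl_inj R P hR0 hRs hP0 hPs T hT hl0 hl1
      have hbb := bb_of_inj_closedRange hinj hUSW.2.1
      exact Rl_not_bb R hR0 hRs hl (bb_fst R P T hT hbb)

include hR0 hRs hP0 hPs hT in
lemma norm_T_le_one : ‖T‖ ≤ 1 :=
  ContinuousLinearMap.opNorm_le_bound T zero_le_one (fun v => by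
    simpa using T_norm_le R P hR0 hRs hP0 hPs T hT v)

include hR0 hRs hP0 hPs hT in
lemma spec_T_subset : spectrum ℂ T ⊆ Metric.closedBall 0 1 := by
  intro l hl
  have h1 := spectrum.subset_closedBall_norm_mul T hl
  rw [Metric.mem_closedBall, dist_zero_right] at h1 ⊢
  have h2 : ‖(1 : ell2 × ell2 →L[ℂ] ell2 × ell2)‖ ≤ 1 := ContinuousLinearMap.norm_id_le
  have h3 := norm_T_le_one R P hR0 hRs hP0 hPs T hT
  calc ‖l‖ ≤ ‖T‖ * ‖(1 : ell2 × ell2 →L[ℂ] ell2 × ell2)‖ := h1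
    _ ≤ 1 := by nlinarith [norm_nonneg T, norm_nonneg (1 : ell2 × ell2 →L[ℂ] ell2 × ell2)]

include hR0 hRs hT in
lemma mem_spec_of_le {l : ℂ} (hl : ‖l‖ ≤ 1) : l ∈ spectrum ℂ T := by
  rw [spectrum.mem_iff]
  intro hunit
  obtain ⟨u, hu⟩ := hunit
  set w : ell2 × ell2 := (↑u⁻¹ : ell2 × ell2 →L[ℂ] ell2 × ell2) (-(e0, (0:ell2))) with hw
  have hsur : (algebraMap ℂ (ell2 × ell2 →L[ℂ] ell2 × ell2) l - T) w = -(e0, (0:ell2)) := by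
    rw [← hu, hw]
    have := u.mul_inv
    calc (↑u : ell2 × ell2 →L[ℂ] ell2 × ell2) ((↑u⁻¹ : ell2 × ell2 →L[ℂ] ell2 × ell2) (-(e0, (0:ell2))))
        = ((↑u * ↑u⁻¹ : ell2 × ell2 →L[ℂ] ell2 × ell2)) (-(e0, (0:ell2))) := rfl
      _ = -(e0, (0:ell2)) := by rw [this]; rfl
  have hTl : (T - l • (1 : ell2 × ell2 →L[ℂ] ell2 × ell2)) w = (e0, (0:ell2)) := by
    have halg : algebraMap ℂ (ell2 × ell2 →L[ℂ] ell2 × ell2) l = l • 1 :=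
      Algebra.algebraMap_eq_smul_one l
    have : (T - l • (1 : ell2 × ell2 →L[ℂ] ell2 × ell2))
        = -(algebraMap ℂ (ell2 × ell2 →L[ℂ] ell2 × ell2) l - T) := by
      rw [halg, neg_sub]
    rw [this, ContinuousLinearMap.neg_apply, hsur, neg_neg]
  rw [Tl_apply R P T hT] at hTl
  have h1 : (R - l • (1 : ell2 →L[ℂ] ell2)) w.1 = e0 := congrArg Prod.fst hTl
  exact e0_not_mem_range R hR0 hRs l hl ⟨w.1, h1⟩

include hR0 hRs in
lemma Rl_pow_inj (l : ℂ) : ∀ n : ℕ,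
    Function.Injective (((R - l • (1 : ell2 →L[ℂ] ell2))) ^ n) := by
  intro n
  induction n with
  | zero =>
    intro a b h
    simpa [ContinuousLinearMap.one_apply] using h
  | succ k ih =>
    intro a b h
    rw [pow_succ, ContinuousLinearMap.mul_apply, ContinuousLinearMap.mul_apply] at h
    exact Rl_inj R hR0 hRs l (ih h)

include hR0 hRs hP0 hPs hT in
lemma poles_T : poles T = ∅ := by
  rw [Set.eq_empty_iff_forall_notMem]
  rintro l ⟨hspec, hasc, hdesc⟩
  have hl : ‖l‖ ≤ 1 := by
    have := spec_T_subset R P hR0 hRs hP0 hPs T hT hspec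
    rwa [Metric.mem_closedBall, dist_zero_right] at this
  obtain ⟨n, hn⟩ := hdesc
  have hmem : (((R - l • (1 : ell2 →L[ℂ] ell2)) ^ n) e0, (0:ell2))
      ∈ LinearMap.range (((T - l • (1 : ell2 × ell2 →L[ℂ] ell2 × ell2)) ^ n : ell2 × ell2 →L[ℂ] ell2 × ell2) : ell2 × ell2 →ₗ[ℂ] ell2 × ell2) := by
    refine ⟨(e0, (0:ell2)), ?_⟩
    rw [ContinuousLinearMap.coe_coe, Tl_pow R P T hT]
    simp only [map_zero]
  rw [hn] at hmem
  obtain ⟨z, hz⟩ := hmem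
  rw [ContinuousLinearMap.coe_coe, Tl_pow R P T hT] at hz
  have h1 : ((R - l • (1 : ell2 →L[ℂ] ell2)) ^ (n+1)) z.1
      = ((R - l • (1 : ell2 →L[ℂ] ell2)) ^ n) e0 := congrArg Prod.fst hz
  rw [pow_succ, ContinuousLinearMap.mul_apply] at h1
  have h2 : (R - l • (1 : ell2 →L[ℂ] ell2)) z.1 = e0 := Rl_pow_inj R hR0 hRs l n h1
  exact e0_not_mem_range R hR0 hRs l hl ⟨z.1, h2⟩

end T3


section T4
variable (R P : ell2 →L[ℂ] ell2)
    (hR0 : ∀ x : ell2, R x 0 = 0) (hRs : ∀ (x : ell2) (n : ℕ), R x (n + 1) = x n)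
    (hP0 : ∀ x : ell2, P x 0 = 0) (hPs : ∀ (x : ell2) (n : ℕ), P x (n + 1) = x (n + 1))
    (T : ell2 × ell2 →L[ℂ] ell2 × ell2) (hT : ∀ v : ell2 × ell2, T v = (R v.1, P v.2))

include hR0 hRs hP0 hPs hT in
lemma specP_T_subset : specP T ⊆ {0, 1} := by
  rintro l ⟨v, hv, hveq⟩
  rw [hT] at hveq
  have h1 : R v.1 = l • v.1 := congrArg Prod.fst hveq
  have h2 : P v.2 = l • v.2 := congrArg Prod.snd hveq
  have hv1 : v.1 = 0 := by
    apply Rl_inj R hR0 hRs l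
    rw [map_zero, ContinuousLinearMap.sub_apply, h1]
    simp
  by_contra hcon
  simp only [Set.mem_insert_iff, Set.mem_singleton_iff] at hcon
  push_neg at hcon
  have hv2 : v.2 = 0 := by
    apply Pl_inj P hP0 hPs hcon.1 hcon.2
    rw [map_zero, ContinuousLinearMap.sub_apply, h2]
    simp
  exact hv (Prod.ext hv1 hv2)

include hP0 hPs hT in
lemma zero_mem_specP : (0:ℂ) ∈ specP T := by
  refine ⟨((0:ell2), e0), fun h => e0_ne_zero (congrArg Prod.snd h), ?_⟩
  rw [hT]
  have := P_eigen0 P hP0 hPs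
  simp [this]

lemma not_iso_ball {A : Set ℂ} (hA : ∀ z : ℂ, ‖z‖ ≤ 1 → z ∈ A) {l : ℂ}
    (hl : ‖l‖ ≤ 1) : l ∉ isoPts A := by
  rintro ⟨hlA, U, hU, hUA⟩
  obtain ⟨ε, hε, hball⟩ := Metric.mem_nhds_iff.mp hU
  set m : ℝ := min ε 1 with hm
  have hm0 : 0 < m := lt_min hε one_pos
  set s : ℝ := m / 2 with hs
  have hs0 : 0 < s := by positivity
  have hsε : s < ε := by
    have h1 : m ≤ ε := min_le_left _ _
    have : s < m := by rw [hs]; linarith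
    linarith
  have hs1 : s ≤ 1 := by
    have := min_le_right ε 1
    rw [hs]; linarith
  by_cases hl0 : l = 0
  · subst hl0
    have hnorm : ‖((s:ℝ):ℂ)‖ = s := by
      rw [Complex.norm_real, Real.norm_eq_abs, abs_of_pos hs0]
    have hzU : ((s:ℝ):ℂ) ∈ U := hball (by
      rw [Metric.mem_ball, dist_zero_right, hnorm]; exact hsε)
    have hzA : ((s:ℝ):ℂ) ∈ A := hA _ (by rw [hnorm]; linarith)
    have hz0 : ((s:ℝ):ℂ) = 0 := by
      have := (Set.ext_iff.mp hUA ((s:ℝ):ℂ)).mp ⟨hzU, hzA⟩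
      simpa using this
    rw [Complex.ofReal_eq_zero] at hz0
    linarith
  · set z : ℂ := (1 - (s:ℂ)) * l with hz
    have hdiff : z - l = -((s:ℂ) * l) := by rw [hz]; ring
    have hnormd : ‖z - l‖ = s * ‖l‖ := by
      rw [hdiff, norm_neg, norm_mul, Complex.norm_real, Real.norm_eq_abs, abs_of_pos hs0]
    have hzU : z ∈ U := hball (by
      rw [Metric.mem_ball, dist_eq_norm, hnormd]
      nlinarith [norm_nonneg l])
    have hzA : z ∈ A := hA _ (by
      rw [hz, norm_mul]
      have h1 : ‖(1 - (s:ℂ))‖ = 1 - s := by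
        rw [show (1 - (s:ℂ)) = (((1 - s : ℝ)):ℂ) by push_cast; ring,
          Complex.norm_real, Real.norm_eq_abs, abs_of_nonneg (by linarith)]
      rw [h1]
      nlinarith [norm_nonneg l])
    have hzl : z = l := by
      have := (Set.ext_iff.mp hUA z).mp ⟨hzU, hzA⟩
      simpa using this
    have : (s:ℂ) * l = 0 := by
      have h0 : z - l = 0 := by rw [hzl, sub_self]
      rw [hdiff] at h0
      simpa using h0
    rcases mul_eq_zero.mp this with h | h
    · rw [Complex.ofReal_eq_zero] at h; linarith
    · exact hl0 h

lemma not_iso_sphere {A : Set ℂ} (hA : ∀ z : ℂ, ‖z‖ = 1 → z ∈ A) {l : ℂ}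
    (hl : ‖l‖ = 1) : l ∉ isoPts A := by
  rintro ⟨hlA, U, hU, hUA⟩
  obtain ⟨ε, hε, hball⟩ := Metric.mem_nhds_iff.mp hU
  have hl0 : l ≠ 0 := by intro h; rw [h] at hl; simp at hl
  set m : ℝ := min ε 1 with hm
  have hm0 : 0 < m := lt_min hε one_pos
  set s : ℝ := m / 4 with hs
  have hs0 : 0 < s := by positivity
  have hs1 : s ≤ 1 / 4 := by
    have := min_le_right ε 1
    rw [hs]; linarith
  have hsε : 2 * s < ε := by
    have := min_le_left ε 1
    rw [hs]; linarith
  set z : ℂ := Complex.exp ((s:ℂ) * Complex.I) * l with hz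
  have habs : ‖Complex.exp ((s:ℂ) * Complex.I)‖ = 1 :=
    Complex.norm_exp_ofReal_mul_I s
  have hzA : z ∈ A := hA _ (by
    rw [hz, norm_mul, habs, hl, one_mul])
  have hdiff : z - l = (Complex.exp ((s:ℂ) * Complex.I) - 1) * l := by rw [hz]; ring
  have hbound : ‖z - l‖ < ε := by
    rw [hdiff, norm_mul, hl, mul_one]
    have h1 : ‖(s:ℂ) * Complex.I‖ = s := by
      rw [norm_mul, Complex.norm_I, mul_one, Complex.norm_real, Real.norm_eq_abs, abs_of_pos hs0]
    have h2 : ‖Complex.exp ((s:ℂ) * Complex.I) - 1‖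
        ≤ 2 * ‖(s:ℂ) * Complex.I‖ := by
      apply Complex.norm_exp_sub_one_le
      rw [h1]; linarith
    rw [h1] at h2
    linarith
  have hzU : z ∈ U := hball (by rw [Metric.mem_ball, dist_eq_norm]; exact hbound)
  have hzl : z = l := by
    have := (Set.ext_iff.mp hUA z).mp ⟨hzU, hzA⟩
    simpa using this
  have hexp1 : Complex.exp ((s:ℂ) * Complex.I) = 1 := by
    have h0 : (Complex.exp ((s:ℂ) * Complex.I) - 1) * l = 0 := by
      rw [← hdiff, hzl, sub_self]
    rcases mul_eq_zero.mp h0 with h | h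
    · exact sub_eq_zero.mp h
    · exact absurd h hl0
  have him : Real.sin s = 0 := by
    have := congrArg Complex.im hexp1
    rwa [Complex.exp_ofReal_mul_I_im] at this
  have hsin : 0 < Real.sin s := by
    apply Real.sin_pos_of_pos_of_lt_pi hs0
    have := Real.pi_gt_three
    linarith
  linarith

lemma iso_zero : (0:ℂ) ∈ isoPts (Metric.sphere (0:ℂ) 1 ∪ {0}) := by
  refine ⟨Or.inr rfl, Metric.ball 0 (1/2), Metric.ball_mem_nhds _ (by norm_num), ?_⟩
  ext z
  constructor
  · rintro ⟨hzb, hz | hz⟩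
    · exfalso
      rw [Metric.mem_ball, dist_zero_right] at hzb
      rw [mem_sphere_zero_iff_norm] at hz
      rw [hz] at hzb
      norm_num at hzb
    · exact hz
  · rintro rfl
    exact ⟨Metric.mem_ball_self (by norm_num), Or.inr rfl⟩

include hR0 hRs hP0 hPs hT in
lemma setEa_T : setEa T = {0} := by
  rw [setEa, specA_T R P hR0 hRs hP0 hPs T hT]
  ext l
  constructor
  · rintro ⟨hiso, hP⟩
    by_contra hl0
    have hlmem : l ∈ Metric.sphere (0:ℂ) 1 ∪ {0} := hiso.1
    have hlsph : ‖l‖ = 1 := by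
      rcases hlmem with h | h
      · rwa [mem_sphere_zero_iff_norm] at h
      · exact absurd h hl0
    exact not_iso_sphere (fun z hz => Or.inl (mem_sphere_zero_iff_norm.mpr hz)) hlsph hiso
  · rintro rfl
    exact ⟨iso_zero, zero_mem_specP R P hP0 hPs T hT⟩

include hR0 hRs hP0 hPs hT in
lemma setE_T : setE T = ∅ := by
  rw [Set.eq_empty_iff_forall_notMem]
  rintro l ⟨hiso, hP⟩
  have hl : ‖l‖ ≤ 1 := by
    have := spec_T_subset R P hR0 hRs hP0 hPs T hT hiso.1
    rwa [Metric.mem_closedBall, dist_zero_right] at this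
  exact not_iso_ball (fun z hz => mem_spec_of_le R P hR0 hRs T hT hz) hl hiso

end T4

end Aux


theorem stmt5 (R P : ell2 →L[ℂ] ell2)
    (hR0 : ∀ x : ell2, R x 0 = 0) (hRs : ∀ (x : ell2) (n : ℕ), R x (n + 1) = x n)
    (hP0 : ∀ x : ell2, P x 0 = 0) (hPs : ∀ (x : ell2) (n : ℕ), P x (n + 1) = x (n + 1))
    (T : ell2 × ell2 →L[ℂ] ell2 × ell2) (hT : ∀ v : ell2 × ell2, T v = (R v.1, P v.2)) :
    specA T = Metric.sphere (0 : ℂ) 1 ∪ {0} ∧ specUW T = Metric.sphere (0 : ℂ) 1 ∧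
      setEa T = {0} ∧ poles T = ∅ ∧ setE T = ∅ ∧
      propUWEa T ∧ ¬ propUWPi T ∧ ¬ propUWE T := by
  have hA := Aux.specA_T R P hR0 hRs hP0 hPs T hT
  have hUW := Aux.specUW_T R P hR0 hRs hP0 hPs T hT
  have hEa := Aux.setEa_T R P hR0 hRs hP0 hPs T hT
  have hPo := Aux.poles_T R P hR0 hRs hP0 hPs T hT
  have hE := Aux.setE_T R P hR0 hRs hP0 hPs T hT
  have hdiff : specA T \ specUW T = {0} := by
    rw [hA, hUW]
    ext z
    simp only [Set.mem_diff, Set.mem_union, Set.mem_singleton_iff, mem_sphere_zero_iff_norm]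
    constructor
    · rintro ⟨h1 | h1, h2⟩
      · exact absurd h1 h2
      · exact h1
    · rintro rfl
      refine ⟨Or.inr rfl, ?_⟩
      simp
  refine ⟨hA, hUW, hEa, hPo, hE, ?_, ?_, ?_⟩
  · show specA T \ specUW T = setEa T
    rw [hdiff, hEa]
  · intro h
    have h' : specA T \ specUW T = poles T := h
    rw [hdiff, hPo] at h'
    simpa using h'
  · intro h
    have h' : specA T \ specUW T = setE T := h
    rw [hdiff, hE] at h'
    simpa using h'
end

section
/- Let R and L be the right and left shift operators on ℓ²(ℕ) and set T = R ⊕ R ⊕ L. Then σ(T) = σ_a(T) = σ_w(T) = D(0,1), Π(T) = Π_a(T) = ∅, while 0 ∈ σ_a(T)\σ_uw(T) (since α(T) = 1 and β(T) = 2). Hence T satisfies property (Z_{Π_a}) but not property (UW_Π). -/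
open OpSpec Cardinal

set_option maxHeartbeats 1000000
set_option synthInstance.maxHeartbeats 1000000

namespace StmtAux

open ENNReal

abbrev X3 : Type := ell2 × ell2 × ell2

lemma ell2_ext {x y : ell2} (h : ∀ n, x n = y n) : x = y := lp.ext (funext h)

lemma ell2_summable (x : ell2) : Summable (fun n => ‖x n‖ ^ 2) := by
  have h := (lp.memℓp x).summable (by norm_num : 0 < ((2:ℝ≥0∞)).toReal)
  norm_num at h
  simpa using h

lemma ell2_norm_sq (x : ell2) : ‖x‖ ^ 2 = ∑' n, ‖x n‖ ^ 2 := by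
  have := lp.norm_rpow_eq_tsum (p := 2) (by norm_num) x
  norm_num at this
  simpa using this

lemma ell2_sum_sq_le (x : ell2) (s : Finset ℕ) : ∑ i ∈ s, ‖x i‖ ^ 2 ≤ ‖x‖ ^ 2 := by
  have := lp.sum_rpow_le_norm_rpow (p := 2) (by norm_num) x s
  norm_num at this
  simpa using this

lemma ell2_coord_tendsto (x : ell2) : Filter.Tendsto (fun n => ‖x n‖) Filter.atTop (nhds 0) := by
  have h := (ell2_summable x).tendsto_atTop_zero
  have : Filter.Tendsto (fun n => Real.sqrt (‖x n‖^2)) Filter.atTop (nhds (Real.sqrt 0)) :=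
    (Real.continuous_sqrt.continuousAt).tendsto.comp h
  simpa [Real.sqrt_sq (norm_nonneg _)] using this

lemma ell2_coord_bound {x : ell2} {a : ℝ} (h : ∀ n, a ≤ ‖x n‖) : a ≤ 0 :=
  ge_of_tendsto' (ell2_coord_tendsto x) h

lemma ell2_sub_apply (x y : ell2) (n : ℕ) : (x - y) n = x n - y n := by
  rw [lp.coeFn_sub]; rfl

lemma ell2_add_apply (x y : ell2) (n : ℕ) : (x + y) n = x n + y n := by
  rw [lp.coeFn_add]; rfl

lemma ell2_smul_apply (c : ℂ) (x : ell2) (n : ℕ) : (c • x) n = c * x n := by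
  rw [lp.coeFn_smul]; rfl

lemma ell2_zero_apply (n : ℕ) : (0 : ell2) n = 0 := by rw [lp.coeFn_zero]; rfl

lemma ell2_single_apply (i j : ℕ) (a : ℂ) : (lp.single 2 i a : ell2) j = if j = i then a else 0 := by
  rw [lp.single_apply]
  split <;> simp_all

lemma ell2_norm_single (i : ℕ) : ‖(lp.single 2 i (1:ℂ) : ell2)‖ = 1 := by
  have := lp.norm_single (p := 2) (E := fun _ : ℕ => ℂ) (by norm_num) i (1:ℂ)
  simpa using this

instance : Nontrivial ell2 := by
  refine ⟨lp.single 2 0 (1:ℂ), 0, fun h => ?_⟩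
  have h0 : (lp.single 2 0 (1:ℂ) : ell2) 0 = (0:ell2) 0 := by rw [h]
  rw [ell2_single_apply, ell2_zero_apply] at h0
  simp at h0

section Shifts

variable (R L : ell2 →L[ℂ] ell2)
  (hR0 : ∀ x : ell2, R x 0 = 0) (hRs : ∀ (x : ell2) (n : ℕ), R x (n + 1) = x n)
  (hL : ∀ (x : ell2) (n : ℕ), L x n = x (n + 1))

include hR0 in
lemma Rl_apply0 (l : ℂ) (x : ell2) : ((R - l • 1) x) 0 = -(l * x 0) := by
  rw [ContinuousLinearMap.sub_apply, ContinuousLinearMap.smul_apply,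
    ContinuousLinearMap.one_apply, ell2_sub_apply, ell2_smul_apply, hR0]
  ring

include hRs in
lemma Rl_applyS (l : ℂ) (x : ell2) (n : ℕ) :
    ((R - l • 1) x) (n + 1) = x n - l * x (n + 1) := by
  rw [ContinuousLinearMap.sub_apply, ContinuousLinearMap.smul_apply,
    ContinuousLinearMap.one_apply, ell2_sub_apply, ell2_smul_apply, hRs]

include hL in
lemma Ll_apply (l : ℂ) (x : ell2) (n : ℕ) :
    ((L - l • 1) x) n = x (n + 1) - l * x n := by
  rw [ContinuousLinearMap.sub_apply, ContinuousLinearMap.smul_apply,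
    ContinuousLinearMap.one_apply, ell2_sub_apply, ell2_smul_apply, hL]

include hR0 hRs in
lemma Rl_inj (l : ℂ) (x : ell2) (hx : (R - l • 1) x = 0) : x = 0 := by
  have h0 : -(l * x 0) = 0 := by rw [← Rl_apply0 R hR0 l x, hx, ell2_zero_apply]
  have hs : ∀ n, x n = l * x (n + 1) := by
    intro n
    have := Rl_applyS R hRs l x n
    rw [hx, ell2_zero_apply] at this
    linear_combination -this
  rcases eq_or_ne l 0 with rfl | hl
  · refine ell2_ext fun n => by rw [hs n, zero_mul, ell2_zero_apply]
  · have hx0 : x 0 = 0 := by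
      have := neg_eq_zero.mp h0
      exact (mul_eq_zero.mp this).resolve_left hl
    have : ∀ n, x n = 0 := by
      intro n
      induction n with
      | zero => exact hx0
      | succ k ih =>
        have := hs k
        rw [ih] at this
        exact (mul_eq_zero.mp this.symm).resolve_left hl
    exact ell2_ext fun n => by rw [this n, ell2_zero_apply]

include hR0 hRs in
lemma R_norm (x : ell2) : ‖R x‖ = ‖x‖ := by
  have h1 : ‖R x‖ ^ 2 = ‖x‖ ^ 2 := by
    rw [ell2_norm_sq, ell2_norm_sq x,
      Summable.tsum_eq_zero_add (by simpa using ell2_summable (R x))]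
    simp [hR0, hRs]
  nlinarith [norm_nonneg (R x), norm_nonneg x]

include hL in
lemma L_norm (x : ell2) : ‖L x‖ ≤ ‖x‖ := by
  have h1 : ‖L x‖ ^ 2 ≤ ‖x‖ ^ 2 := by
    have e1 : ‖L x‖ ^ 2 = ∑' n : ℕ, ‖x (n+1)‖^2 := by
      rw [ell2_norm_sq]; exact tsum_congr fun n => by rw [hL]
    have e2 : ‖x‖ ^ 2 = ‖x 0‖^2 + ∑' n : ℕ, ‖x (n+1)‖^2 := by
      rw [ell2_norm_sq x]; exact Summable.tsum_eq_zero_add (by simpa using ell2_summable x)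
    rw [e1, e2]
    exact le_add_of_nonneg_left (sq_nonneg _)
  nlinarith [norm_nonneg (L x), norm_nonneg x]

include hR0 hRs in
lemma R_opnorm : ‖R‖ ≤ 1 := by
  refine ContinuousLinearMap.opNorm_le_bound _ zero_le_one fun x => ?_
  rw [R_norm R hR0 hRs, one_mul]

include hRs hL in
lemma LR_eq_one : L * R = 1 := by
  ext1 x
  refine ell2_ext fun n => ?_
  rw [ContinuousLinearMap.mul_apply, hL, hRs, ContinuousLinearMap.one_apply]

lemma geom_mem (l : ℂ) (hl : ‖l‖ < 1) : Memℓp (fun n => l ^ n) 2 := by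
  apply memℓp_gen
  have : Summable (fun n : ℕ => (‖l‖^2) ^ n) :=
    summable_geometric_of_lt_one (by positivity) (by nlinarith [norm_nonneg l])
  apply this.congr
  intro n
  have h2 : ((2:ℝ≥0∞)).toReal = ((2:ℕ):ℝ) := by norm_num
  rw [h2, Real.rpow_natCast, norm_pow]
  ring

noncomputable def gvec (l : ℂ) (hl : ‖l‖ < 1) : ell2 := ⟨fun n => l ^ n, geom_mem l hl⟩

lemma gvec_apply (l : ℂ) (hl : ‖l‖ < 1) (n : ℕ) : (gvec l hl) n = l ^ n := rfl

lemma gvec_ne_zero (l : ℂ) (hl : ‖l‖ < 1) : gvec l hl ≠ 0 := fun h => by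
  have h0 : (gvec l hl) 0 = (0 : ell2) 0 := by rw [h]
  rw [gvec_apply, ell2_zero_apply] at h0
  simp at h0

include hL in
lemma Ll_gvec (l : ℂ) (hl : ‖l‖ < 1) : (L - l • 1) (gvec l hl) = 0 := by
  refine ell2_ext fun n => ?_
  rw [Ll_apply L hL, gvec_apply, gvec_apply, ell2_zero_apply]
  ring

include hL in
lemma ker_Ll_eq (l : ℂ) (hl : ‖l‖ < 1) :
    LinearMap.ker ((L - l • 1 : ell2 →L[ℂ] ell2) : ell2 →ₗ[ℂ] ell2) = Submodule.span ℂ {gvec l hl} := by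
  ext z
  simp only [LinearMap.mem_ker, Submodule.mem_span_singleton, ContinuousLinearMap.coe_coe]
  constructor
  · intro hz
    refine ⟨z 0, ell2_ext fun n => ?_⟩
    have hrec : ∀ n, z (n + 1) = l * z n := by
      intro n
      have := Ll_apply L hL l z n
      rw [hz, ell2_zero_apply] at this
      linear_combination -this
    have hgen : ∀ n, z n = l ^ n * z 0 := by
      intro n
      induction n with
      | zero => simp
      | succ k ih => rw [hrec k, ih]; ring
    rw [ell2_smul_apply, gvec_apply, hgen n]; ring
  · rintro ⟨a, rfl⟩
    rw [map_smul, Ll_gvec L hL l hl, smul_zero]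

include hL in
lemma ker_Ll_bot (l : ℂ) (hl : 1 ≤ ‖l‖) (z : ell2) (hz : (L - l • 1) z = 0) : z = 0 := by
  have hrec : ∀ n, z (n + 1) = l * z n := by
    intro n
    have := Ll_apply L hL l z n
    rw [hz, ell2_zero_apply] at this
    linear_combination -this
  have hgen : ∀ n, z n = l ^ n * z 0 := by
    intro n
    induction n with
    | zero => simp
    | succ k ih => rw [hrec k, ih]; ring
  have h0 : z 0 = 0 := by
    by_contra h0
    have hb : ∀ n, ‖z 0‖ ≤ ‖z n‖ := by
      intro n
      rw [hgen n, norm_mul, norm_pow]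
      calc ‖z 0‖ = 1 * ‖z 0‖ := (one_mul _).symm
        _ ≤ ‖l‖^n * ‖z 0‖ := mul_le_mul_of_nonneg_right (one_le_pow₀ hl) (norm_nonneg _)
    have := ell2_coord_bound hb
    exact absurd (norm_le_zero_iff.mp this) h0
  refine ell2_ext fun n => ?_
  rw [hgen n, h0, ell2_zero_apply, mul_zero]

include hR0 hRs hL in
lemma Ll_surj (l : ℂ) (hl : ‖l‖ < 1) : Function.Surjective ⇑(L - l • 1) := by
  have hn : ‖l • R‖ < 1 := by
    calc ‖l • R‖ ≤ ‖l‖ * ‖R‖ := norm_smul_le l R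
      _ ≤ ‖l‖ * 1 := by
          have := R_opnorm R hR0 hRs
          have h0 : (0:ℝ) ≤ ‖l‖ := norm_nonneg l
          nlinarith
      _ < 1 := by rwa [mul_one]
  set u := Units.oneSub (l • R) hn with hu
  have key : (L - l • 1) * (R * ↑u⁻¹) = 1 := by
    have h1 : (L - l • 1) * R = 1 - l • R := by
      rw [sub_mul, LR_eq_one R L hRs hL, smul_mul_assoc, one_mul]
    rw [← mul_assoc, h1]
    have h2 : (1 - l • R) = (u : (ell2 →L[ℂ] ell2)) := by rw [hu, Units.val_oneSub]
    rw [h2]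
    exact u.mul_inv
  intro y
  refine ⟨(R * ↑u⁻¹) y, ?_⟩
  have := congrArg (fun S : ell2 →L[ℂ] ell2 => S y) key
  simpa using this

include hR0 hRs in
lemma single_notin_range (l : ℂ) (hl : ‖l‖ < 1) :
    (lp.single 2 0 (1:ℂ) : ell2) ∉ Set.range ⇑(R - l • 1) := by
  rintro ⟨x, hx⟩
  have h0 : -(l * x 0) = 1 := by
    rw [← Rl_apply0 R hR0 l x, hx, ell2_single_apply]; simp
  have hl0 : l ≠ 0 := by rintro rfl; simp at h0
  have hs : ∀ n, x (n + 1) = x n / l := by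
    intro n
    have := Rl_applyS R hRs l x n
    rw [hx, ell2_single_apply] at this
    norm_num at this
    rw [eq_div_iff hl0]
    linear_combination this
  have hgen : ∀ n, x n = x 0 / l ^ n := by
    intro n
    induction n with
    | zero => simp
    | succ k ih => rw [hs k, ih, div_div, ← pow_succ]
  have hx0 : ‖x 0‖ ≠ 0 := by
    simp only [norm_ne_zero_iff]
    intro h
    rw [h] at h0; simp at h0
  have hb : ∀ n, ‖x 0‖ ≤ ‖x n‖ := by
    intro n
    rw [hgen n, norm_div, norm_pow]
    rcases eq_or_lt_of_le (norm_nonneg l) with h | h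
    · exact absurd (norm_eq_zero.mp h.symm) hl0
    · rw [le_div_iff₀ (by positivity)]
      nlinarith [pow_le_one₀ (norm_nonneg l) hl.le (n := n), norm_nonneg (x 0),
        pow_pos h n]
  have := ell2_coord_bound hb
  exact hx0 (le_antisymm this (norm_nonneg _))

end Shifts

/-- generic: injective + closed range implies bounded below -/
lemma bdd_below_of_inj_closed {Y : Type*} [NormedAddCommGroup Y] [NormedSpace ℂ Y]
    [CompleteSpace Y] (S : Y →L[ℂ] Y) (hinj : LinearMap.ker (S : Y →ₗ[ℂ] Y) = ⊥)
    (hcl : IsClosed (LinearMap.range (S : Y →ₗ[ℂ] Y) : Set Y)) : ∃ c > 0, ∀ x, c * ‖x‖ ≤ ‖S x‖ := by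
  haveI : CompleteSpace (LinearMap.range (S : Y →ₗ[ℂ] Y)) := hcl.completeSpace_coe
  set S' : Y →L[ℂ] LinearMap.range (S : Y →ₗ[ℂ] Y) :=
    S.codRestrict (LinearMap.range (S : Y →ₗ[ℂ] Y)) (fun x => LinearMap.mem_range_self _ x) with hS'
  have hinj' : LinearMap.ker (S' : Y →ₗ[ℂ] LinearMap.range (S : Y →ₗ[ℂ] Y)) = ⊥ := by
    rw [hS', ContinuousLinearMap.ker_codRestrict]; exact hinj
  have hsurj' : LinearMap.range (S' : Y →ₗ[ℂ] LinearMap.range (S : Y →ₗ[ℂ] Y)) = ⊤ := by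
    rw [LinearMap.range_eq_top]
    rintro ⟨y, x, hx⟩
    exact ⟨x, Subtype.ext hx⟩
  set e := ContinuousLinearEquiv.ofBijective S' hinj' hsurj'
  refine ⟨(‖(e.symm : LinearMap.range (S : Y →ₗ[ℂ] Y) →L[ℂ] Y)‖ + 1)⁻¹, by positivity, fun x => ?_⟩
  have hx : x = e.symm (e x) := (e.symm_apply_apply x).symm
  have hle : ‖x‖ ≤ (‖(e.symm : LinearMap.range (S : Y →ₗ[ℂ] Y) →L[ℂ] Y)‖ + 1) * ‖e x‖ := by
    calc ‖x‖ = ‖e.symm (e x)‖ := by rw [← hx]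
      _ ≤ ‖(e.symm : LinearMap.range (S : Y →ₗ[ℂ] Y) →L[ℂ] Y)‖ * ‖e x‖ :=
          (e.symm : LinearMap.range (S : Y →ₗ[ℂ] Y) →L[ℂ] Y).le_opNorm (e x)
      _ ≤ _ := by nlinarith [norm_nonneg (e x), norm_nonneg (e.symm : LinearMap.range (S : Y →ₗ[ℂ] Y) →L[ℂ] Y)]
  have hex : ‖e x‖ = ‖S x‖ := by
    have h3 : (e x : Y) = S x := rfl
    rw [← h3]; rfl
  rw [inv_mul_le_iff₀ (by positivity), ← hex]
  exact hle

section TOps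

variable (R L : ell2 →L[ℂ] ell2) (T : X3 →L[ℂ] X3)
  (hT : ∀ v : X3, T v = (R v.1, R v.2.1, L v.2.2))

include hT in
lemma Tl_apply (l : ℂ) (v : X3) :
    (T - l • 1) v = ((R - l • 1) v.1, (R - l • 1) v.2.1, (L - l • 1) v.2.2) := by
  simp [hT, Prod.ext_iff]

include hT in
lemma Tl_pow (l : ℂ) (n : ℕ) (v : X3) :
    ((T - l • 1) ^ n) v =
      (((R - l • 1) ^ n) v.1, ((R - l • 1) ^ n) v.2.1, ((L - l • 1) ^ n) v.2.2) := by
  induction n generalizing v with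
  | zero => simp
  | succ k ih =>
    rw [pow_succ, pow_succ, pow_succ]
    simp only [ContinuousLinearMap.mul_apply]
    rw [Tl_apply R L T hT, ih]

lemma norm_triple (a b c : ell2) : ‖((a, b, c) : X3)‖ = max ‖a‖ (max ‖b‖ ‖c‖) := by
  rw [Prod.norm_def, Prod.norm_def]

noncomputable def tg (l : ℂ) (n : ℕ) : ell2 :=
  ∑ k ∈ Finset.range (n+1), (l ^ k) • (lp.single 2 k (1:ℂ) : ell2)

lemma tg_apply (l : ℂ) (n j : ℕ) : (tg l n) j = if j ≤ n then l ^ j else 0 := by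
  rw [tg, lp.coeFn_sum]
  simp only [Finset.sum_apply]
  have h1 : ∀ k ∈ Finset.range (n+1), ((l ^ k) • (lp.single 2 k (1:ℂ) : ell2)) j
      = if k = j then l ^ j else 0 := by
    intro k _
    rw [ell2_smul_apply, ell2_single_apply]
    by_cases h : j = k <;> simp [h, eq_comm]
  rw [Finset.sum_congr rfl h1, Finset.sum_ite_eq' (Finset.range (n+1)) j]
  simp [Nat.lt_succ_iff]

lemma tg_norm_sq (l : ℂ) (hl : ‖l‖ = 1) (n : ℕ) : (n + 1 : ℝ) ≤ ‖tg l n‖ ^ 2 := by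
  have h0 := ell2_sum_sq_le (tg l n) (Finset.range (n+1))
  have h2 : ∀ k ∈ Finset.range (n+1), ‖(tg l n) k‖ ^ 2 = 1 := by
    intro k hk
    rw [tg_apply, if_pos (Nat.lt_succ_iff.mp (Finset.mem_range.mp hk)), norm_pow, hl]
    norm_num
  rw [Finset.sum_congr rfl h2] at h0
  simpa using h0

variable (hR0 : ∀ x : ell2, R x 0 = 0) (hRs : ∀ (x : ell2) (n : ℕ), R x (n + 1) = x n)
  (hL : ∀ (x : ell2) (n : ℕ), L x n = x (n + 1))

include hR0 hRs hL hT in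
lemma T_opnorm : ‖T‖ ≤ 1 := by
  refine ContinuousLinearMap.opNorm_le_bound _ zero_le_one fun v => ?_
  rw [one_mul]
  calc ‖T v‖ = max ‖R v.1‖ (max ‖R v.2.1‖ ‖L v.2.2‖) := by rw [hT, norm_triple]
    _ ≤ max ‖v.1‖ (max ‖v.2.1‖ ‖v.2.2‖) := by
        refine max_le_max (le_of_eq (R_norm R hR0 hRs v.1))
          (max_le_max (le_of_eq (R_norm R hR0 hRs v.2.1)) (L_norm L hL v.2.2))
    _ = ‖v‖ := by rw [Prod.norm_def, Prod.norm_def]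

include hL in
lemma Ll_tg (l : ℂ) (n : ℕ) :
    (L - l • 1) (tg l n) = (-(l^(n+1))) • (lp.single 2 n (1:ℂ) : ell2) := by
  refine ell2_ext fun j => ?_
  rw [Ll_apply L hL, tg_apply, tg_apply, ell2_smul_apply, ell2_single_apply]
  rcases lt_trichotomy j n with h | rfl | h
  · rw [if_pos (by omega : j + 1 ≤ n), if_pos (le_of_lt h), if_neg (by omega)]
    ring
  · rw [if_neg (by omega), if_pos (le_refl j), if_pos rfl]
    ring
  · rw [if_neg (by omega), if_neg (by omega), if_neg (by omega)]
    ring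

include hR0 hRs hL hT in
lemma notBB (l : ℂ) (hl : ‖l‖ ≤ 1) :
    ¬ (∃ c > 0, ∀ v : X3, c * ‖v‖ ≤ ‖(T - l • 1) v‖) := by
  rintro ⟨c, hc, hb⟩
  rcases lt_or_eq_of_le hl with hl1 | hl1
  · -- eigenvector
    set v : X3 := (0, 0, gvec l hl1) with hv
    have hval : (T - l • 1) v = 0 := by
      rw [Tl_apply R L T hT]
      simp only [hv, map_zero, Ll_gvec L hL l hl1]
      rfl
    have h2 := hb v
    rw [hval, norm_zero] at h2
    have hvne : v ≠ 0 := by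
      intro h
      apply gvec_ne_zero l hl1
      have := congrArg (fun w : X3 => w.2.2) h
      simpa [hv] using this
    have : 0 < ‖v‖ := norm_pos_iff.mpr hvne
    nlinarith
  · -- approximate eigenvectors
    obtain ⟨m, hm⟩ := exists_nat_gt (1 / c^2)
    have hval : (T - l • 1) ((0, 0, tg l m) : X3)
        = ((0 : ell2), (0 : ell2), (-(l^(m+1))) • (lp.single 2 m (1:ℂ) : ell2)) := by
      rw [Tl_apply R L T hT]
      show ((R - l • 1) 0, (R - l • 1) 0, (L - l • 1) (tg l m)) = _
      rw [map_zero, Ll_tg L hL l m]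
    have hnorm1 : ‖(T - l • 1) ((0, 0, tg l m) : X3)‖ = 1 := by
      rw [hval, norm_triple, norm_smul, norm_neg, norm_pow, hl1, ell2_norm_single]
      simp
    have h2 := hb ((0, 0, tg l m) : X3)
    rw [hnorm1] at h2
    have hvn : ‖((0, 0, tg l m) : X3)‖ = ‖tg l m‖ := by
      rw [norm_triple, norm_zero, max_eq_right, max_eq_right] <;> positivity
    rw [hvn] at h2
    have h3 : (m + 1 : ℝ) ≤ ‖tg l m‖ ^ 2 := tg_norm_sq l hl1 m
    have h5 : 1 < c^2 * ((m:ℝ) + 1) := by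
      rw [div_lt_iff₀ (by positivity)] at hm
      nlinarith
    have h6 : c^2 * ‖tg l m‖^2 ≤ 1 := by
      have h8 := pow_le_pow_left₀ (by positivity : (0:ℝ) ≤ c * ‖tg l m‖) h2 2
      nlinarith [h8]
    have h7 : c^2 * ((m:ℝ)+1) ≤ c^2 * ‖tg l m‖^2 := by nlinarith
    linarith

include hR0 hRs hL hT in
lemma kerT_eq (l : ℂ) (hl : ‖l‖ < 1) :
    LinearMap.ker ((T - l • 1 : X3 →L[ℂ] X3) : X3 →ₗ[ℂ] X3) = Submodule.span ℂ {((0, 0, gvec l hl) : X3)} := by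
  ext v
  rw [LinearMap.mem_ker, Submodule.mem_span_singleton]
  constructor
  · intro hv
    rw [ContinuousLinearMap.coe_coe, Tl_apply R L T hT l v] at hv
    have h1 : (R - l • 1) v.1 = 0 := congrArg Prod.fst hv
    have h2 : (R - l • 1) v.2.1 = 0 := congrArg (Prod.fst ∘ Prod.snd) hv
    have h3 : (L - l • 1) v.2.2 = 0 := congrArg (Prod.snd ∘ Prod.snd) hv
    have h3' : v.2.2 ∈ Submodule.span ℂ {gvec l hl} := by
      rw [← ker_Ll_eq L hL l hl]; exact LinearMap.mem_ker.mpr h3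
    obtain ⟨a, ha⟩ := Submodule.mem_span_singleton.mp h3'
    refine ⟨a, ?_⟩
    have e1 : v.1 = 0 := Rl_inj R hR0 hRs l _ h1
    have e2 : v.2.1 = 0 := Rl_inj R hR0 hRs l _ h2
    rw [Prod.ext_iff, Prod.ext_iff]
    exact ⟨by simpa using e1.symm, by simpa using e2.symm, by simpa using ha⟩
  · rintro ⟨a, rfl⟩
    show (T - l • 1) (a • ((0, 0, gvec l hl) : X3)) = 0
    rw [map_smul]
    have h0 : (T - l • 1) ((0, 0, gvec l hl) : X3) = 0 := by
      rw [Tl_apply R L T hT]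
      simp only [map_zero, Ll_gvec L hL l hl]
      rfl
    rw [h0, smul_zero]

include hR0 hRs hL hT in
lemma kerT_bot (l : ℂ) (hl : ‖l‖ = 1) : LinearMap.ker ((T - l • 1 : X3 →L[ℂ] X3) : X3 →ₗ[ℂ] X3) = ⊥ := by
  rw [LinearMap.ker_eq_bot']
  intro v hv
  rw [ContinuousLinearMap.coe_coe, Tl_apply R L T hT l v] at hv
  have h1 : (R - l • 1) v.1 = 0 := congrArg Prod.fst hv
  have h2 : (R - l • 1) v.2.1 = 0 := congrArg (Prod.fst ∘ Prod.snd) hv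
  have h3 : (L - l • 1) v.2.2 = 0 := congrArg (Prod.snd ∘ Prod.snd) hv
  have e1 : v.1 = 0 := Rl_inj R hR0 hRs l _ h1
  have e2 : v.2.1 = 0 := Rl_inj R hR0 hRs l _ h2
  have e3 : v.2.2 = 0 := ker_Ll_bot L hL l (le_of_eq hl.symm) _ h3
  rw [Prod.ext_iff, Prod.ext_iff]
  exact ⟨e1, e2, e3⟩

include hR0 hRs hL hT in
lemma alphaT (l : ℂ) (hl : ‖l‖ < 1) :
    Module.rank ℂ (LinearMap.ker ((T - l • 1 : X3 →L[ℂ] X3) : X3 →ₗ[ℂ] X3)) = 1 := by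
  rw [kerT_eq R L T hT hR0 hRs hL l hl]
  have hvne : ((0, 0, gvec l hl) : X3) ≠ 0 := by
    intro h
    apply gvec_ne_zero l hl
    have := congrArg (fun w : X3 => w.2.2) h
    simpa using this
  rw [← (LinearEquiv.toSpanNonzeroSingleton ℂ X3 _ hvne).rank_eq, Module.rank_self]

lemma rank_quot_ge2 (W : Submodule ℂ X3) (u1 u2 : X3)
    (h : ∀ s t : ℂ, s • u1 + t • u2 ∈ W → s = 0 ∧ t = 0) :
    2 ≤ Module.rank ℂ (X3 ⧸ W) := by
  have hli : LinearIndependent ℂ ![W.mkQ u1, W.mkQ u2] := by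
    rw [LinearIndependent.pair_iff]
    intro s t hst
    have h1 : W.mkQ (s • u1 + t • u2) = 0 := by simpa using hst
    rw [Submodule.mkQ_apply, Submodule.Quotient.mk_eq_zero] at h1
    exact h s t h1
  have := hli.cardinal_le_rank
  simpa using this

include hR0 hRs hT in
lemma betaT_ge2 (l : ℂ) (hl : ‖l‖ < 1) :
    2 ≤ Module.rank ℂ (X3 ⧸ LinearMap.range ((T - l • 1 : X3 →L[ℂ] X3) : X3 →ₗ[ℂ] X3)) := by
  apply rank_quot_ge2 _ ((lp.single 2 0 (1:ℂ), 0, 0) : X3) ((0, lp.single 2 0 (1:ℂ), 0) : X3)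
  intro s t hst
  obtain ⟨w, hw⟩ := hst
  rw [ContinuousLinearMap.coe_coe, Tl_apply R L T hT l w] at hw
  have hcomb : s • ((lp.single 2 0 (1:ℂ), 0, 0) : X3) + t • ((0, lp.single 2 0 (1:ℂ), 0) : X3)
      = ((s • lp.single 2 0 (1:ℂ), t • lp.single 2 0 (1:ℂ), 0) : X3) := by
    rw [Prod.ext_iff, Prod.ext_iff]
    refine ⟨by simp, by simp, by simp⟩
  rw [hcomb] at hw
  have h1 : (R - l • 1) w.1 = s • lp.single 2 0 (1:ℂ) := congrArg Prod.fst hw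
  have h2 : (R - l • 1) w.2.1 = t • lp.single 2 0 (1:ℂ) := congrArg (Prod.fst ∘ Prod.snd) hw
  constructor
  · by_contra hs
    apply single_notin_range R hR0 hRs l hl
    refine ⟨s⁻¹ • w.1, ?_⟩
    rw [map_smul, h1, smul_smul, inv_mul_cancel₀ hs, one_smul]
  · by_contra hs
    apply single_notin_range R hR0 hRs l hl
    refine ⟨t⁻¹ • w.2.1, ?_⟩
    rw [map_smul, h2, smul_smul, inv_mul_cancel₀ hs, one_smul]

noncomputable def ev0 : ell2 →ₗ[ℂ] ℂ where
  toFun x := x 0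
  map_add' x y := ell2_add_apply x y 0
  map_smul' c x := ell2_smul_apply c x 0

noncomputable def Phi : X3 →ₗ[ℂ] ℂ × ℂ :=
  LinearMap.prod (ev0 ∘ₗ (LinearMap.fst ℂ ell2 (ell2 × ell2)))
    (ev0 ∘ₗ ((LinearMap.fst ℂ ell2 ell2) ∘ₗ (LinearMap.snd ℂ ell2 (ell2 × ell2))))

lemma Phi_apply (v : X3) : Phi v = (v.1 0, v.2.1 0) := rfl

lemma Phi_surj : Function.Surjective Phi := by
  rintro ⟨a, b⟩
  refine ⟨(lp.single 2 0 a, lp.single 2 0 b, 0), ?_⟩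
  rw [Phi_apply]
  simp [ell2_single_apply]

lemma ev0_cont : Continuous (fun x : ell2 => x 0) := by
  apply (LipschitzWith.mk_one fun x y => ?_).continuous
  rw [dist_eq_norm, dist_eq_norm, ← ell2_sub_apply]
  exact lp.norm_apply_le_norm (by norm_num) (x - y) 0

include hR0 hRs hL hT in
lemma rangeT_eq : LinearMap.range (T : X3 →ₗ[ℂ] X3) = LinearMap.ker Phi := by
  ext v
  rw [LinearMap.mem_range, LinearMap.mem_ker, Phi_apply, Prod.ext_iff, ContinuousLinearMap.coe_coe]
  constructor
  · rintro ⟨w, hw⟩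
    rw [← hw]
    have h0 : T w = (R w.1, R w.2.1, L w.2.2) := hT w
    rw [h0]
    exact ⟨hR0 w.1, hR0 w.2.1⟩
  · rintro ⟨h1, h2⟩
    refine ⟨(L v.1, L v.2.1, R v.2.2), ?_⟩
    rw [hT]
    rw [Prod.ext_iff, Prod.ext_iff]
    refine ⟨?_, ?_, ?_⟩
    · refine ell2_ext fun n => ?_
      cases n with
      | zero => rw [hR0]; exact (h1).symm
      | succ k => rw [hRs, hL]
    · refine ell2_ext fun n => ?_
      cases n with
      | zero => rw [hR0]; exact (h2).symm
      | succ k => rw [hRs, hL]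
    · refine ell2_ext fun n => ?_
      rw [hL, hRs]

include hR0 hRs hL hT in
lemma betaT_eq : Module.rank ℂ (X3 ⧸ LinearMap.range (T : X3 →ₗ[ℂ] X3)) = 2 := by
  rw [rangeT_eq R L T hT hR0 hRs hL,
    (LinearMap.quotKerEquivOfSurjective Phi Phi_surj).rank_eq, rank_prod', Module.rank_self]
  norm_num

include hR0 hRs hL hT in
lemma rangeT_closed : IsClosed ((LinearMap.range (T : X3 →ₗ[ℂ] X3) : Submodule ℂ X3) : Set X3) := by
  have h : ((LinearMap.range (T : X3 →ₗ[ℂ] X3) : Submodule ℂ X3) : Set X3)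
      = (fun v : X3 => (v.1 0, v.2.1 0)) ⁻¹' {((0:ℂ),(0:ℂ))} := by
    ext v
    rw [SetLike.mem_coe, rangeT_eq R L T hT hR0 hRs hL]
    simp [LinearMap.mem_ker, Phi_apply, Prod.ext_iff]
  rw [h]
  apply IsClosed.preimage
  · exact (ev0_cont.comp continuous_fst).prodMk
      (ev0_cont.comp (continuous_fst.comp continuous_snd))
  · exact isClosed_singleton

-- spectrum generalities
lemma unit_of_not_spec {l : ℂ} (h : l ∉ spectrum ℂ T) : IsUnit (T - l • 1) := by
  rw [spectrum.notMem_iff] at h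
  have e : T - l • 1 = -(algebraMap ℂ (X3 →L[ℂ] X3) l - T) := by
    rw [Algebra.algebraMap_eq_smul_one, neg_sub]
  rw [e]
  exact h.neg

lemma unit_bddBelow {S : X3 →L[ℂ] X3} (h : IsUnit S) : ∃ c > 0, ∀ x, c * ‖x‖ ≤ ‖S x‖ := by
  obtain ⟨u, hu⟩ := h
  set v := (↑u⁻¹ : X3 →L[ℂ] X3)
  refine ⟨(‖v‖ + 1)⁻¹, by positivity, fun x => ?_⟩
  have hvx : v (S x) = x := by
    have h1 := congrArg (fun w : X3 →L[ℂ] X3 => w x) u.inv_mul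
    simp only [ContinuousLinearMap.mul_apply, ContinuousLinearMap.one_apply] at h1
    rw [← hu]
    exact h1
  rw [inv_mul_le_iff₀ (by positivity)]
  calc ‖x‖ = ‖v (S x)‖ := by rw [hvx]
    _ ≤ ‖v‖ * ‖S x‖ := v.le_opNorm _
    _ ≤ (‖v‖ + 1) * ‖S x‖ := by nlinarith [norm_nonneg (S x), norm_nonneg v]

lemma unit_ker_range {S : X3 →L[ℂ] X3} (h : IsUnit S) :
    LinearMap.ker (S : X3 →ₗ[ℂ] X3) = ⊥ ∧ LinearMap.range (S : X3 →ₗ[ℂ] X3) = ⊤ := by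
  obtain ⟨u, hu⟩ := h
  constructor
  · rw [LinearMap.ker_eq_bot']
    intro x hx
    have h1 := congrArg (fun w : X3 →L[ℂ] X3 => w x) u.inv_mul
    simp only [ContinuousLinearMap.mul_apply, ContinuousLinearMap.one_apply] at h1
    rw [hu] at h1
    rw [show S x = (0:X3) from hx, map_zero] at h1
    exact h1.symm
  · rw [LinearMap.range_eq_top]
    intro y
    refine ⟨(↑u⁻¹ : X3 →L[ℂ] X3) y, ?_⟩
    have h1 := congrArg (fun w : X3 →L[ℂ] X3 => w y) u.mul_inv
    simp only [ContinuousLinearMap.mul_apply, ContinuousLinearMap.one_apply] at h1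
    rw [hu] at h1
    exact h1

lemma unit_of_bij {S : X3 →L[ℂ] X3} (hker : LinearMap.ker (S : X3 →ₗ[ℂ] X3) = ⊥)
    (hrange : LinearMap.range (S : X3 →ₗ[ℂ] X3) = ⊤) : IsUnit S := by
  set e := ContinuousLinearEquiv.ofBijective S hker hrange with he
  refine ⟨⟨S, (e.symm : X3 →L[ℂ] X3), ?_, ?_⟩, rfl⟩
  · refine ContinuousLinearMap.ext fun x => ?_
    have h1 : e.symm x = (e.symm : X3 →L[ℂ] X3) x := rfl
    have h2 : S (e.symm x) = e (e.symm x) := by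
      rw [he]; rfl
    simp only [ContinuousLinearMap.mul_apply, ContinuousLinearMap.one_apply, ← h1, h2,
      e.apply_symm_apply]
  · refine ContinuousLinearMap.ext fun x => ?_
    have h2 : S x = e x := by rw [he]; rfl
    simp only [ContinuousLinearMap.mul_apply, ContinuousLinearMap.one_apply, h2]
    exact e.symm_apply_apply x

-- power lemmas on the circle
include hR0 hRs hL hT in
lemma S_inj_circle (l : ℂ) (hl : ‖l‖ = 1) (n : ℕ) (v : X3)
    (hv : ((T - l • 1) ^ n) v = 0) : v = 0 := by
  induction n generalizing v with
  | zero => simpa using hv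
  | succ k ih =>
    rw [pow_succ, ContinuousLinearMap.mul_apply] at hv
    have h1 : (T - l • 1) v = 0 := ih _ hv
    have := kerT_bot R L T hT hR0 hRs hL l hl
    rw [LinearMap.ker_eq_bot'] at this
    exact this v h1

include hR0 hRs hL hT in
lemma surj_of_desc_circle (l : ℂ) (hl : ‖l‖ = 1) (n : ℕ)
    (hd : LinearMap.range (((T - l • 1) ^ n : X3 →L[ℂ] X3) : X3 →ₗ[ℂ] X3) = LinearMap.range (((T - l • 1) ^ (n+1) : X3 →L[ℂ] X3) : X3 →ₗ[ℂ] X3)) :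
    LinearMap.range ((T - l • 1 : X3 →L[ℂ] X3) : X3 →ₗ[ℂ] X3) = ⊤ := by
  rw [LinearMap.range_eq_top]
  intro y
  have h1 : ((T - l • 1) ^ n) y ∈ LinearMap.range (((T - l • 1) ^ (n+1) : X3 →L[ℂ] X3) : X3 →ₗ[ℂ] X3) := by
    rw [← hd]; exact LinearMap.mem_range_self _ y
  obtain ⟨x, hx⟩ := h1
  rw [ContinuousLinearMap.coe_coe, pow_succ, ContinuousLinearMap.mul_apply] at hx
  have h2 : ((T - l • 1) ^ n) ((T - l • 1) x) - ((T - l • 1) ^ n) y = 0 := by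
    rw [hx]  -- hx : (T-l)^n ((T-l) x) = (T-l)^n y  (check order)
    simp
  rw [← map_sub] at h2
  have h3 := S_inj_circle R L T hT hR0 hRs hL l hl n _ h2
  exact ⟨x, by rwa [sub_eq_zero] at h3⟩

-- surjectivity of powers of Lλ
include hR0 hRs hL in
lemma Ll_pow_surj (l : ℂ) (hl : ‖l‖ < 1) (n : ℕ) :
    Function.Surjective ⇑((L - l • 1) ^ n) := by
  induction n with
  | zero => intro y; exact ⟨y, by simp⟩
  | succ k ih =>
    intro y
    obtain ⟨z, hz⟩ := Ll_surj R L hR0 hRs hL l hl y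
    obtain ⟨w, hw⟩ := ih z
    refine ⟨w, ?_⟩
    rw [pow_succ', ContinuousLinearMap.mul_apply, hw, hz]

include hR0 hRs hL hT in
lemma not_asc (l : ℂ) (hl : ‖l‖ < 1) (p : ℕ) :
    LinearMap.ker (((T - l • 1) ^ p : X3 →L[ℂ] X3) : X3 →ₗ[ℂ] X3) ≠ LinearMap.ker (((T - l • 1) ^ (p+1) : X3 →L[ℂ] X3) : X3 →ₗ[ℂ] X3) := by
  intro hk
  obtain ⟨w, hw⟩ := Ll_pow_surj R L hR0 hRs hL l hl p (gvec l hl)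
  set v : X3 := (0, 0, w) with hv
  have hmem : v ∈ LinearMap.ker (((T - l • 1) ^ (p+1) : X3 →L[ℂ] X3) : X3 →ₗ[ℂ] X3) := by
    rw [LinearMap.mem_ker]
    show ((T - l • 1) ^ (p+1)) v = 0
    rw [Tl_pow R L T hT]
    simp only [hv, map_zero]
    have h3 : ((L - l • 1) ^ (p+1)) w = 0 := by
      rw [pow_succ', ContinuousLinearMap.mul_apply, hw, Ll_gvec L hL l hl]
    rw [h3]
    rfl
  rw [← hk, LinearMap.mem_ker] at hmem
  have h4 : ((T - l • 1) ^ p) v = (0, 0, gvec l hl) := by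
    rw [Tl_pow R L T hT]
    simp only [hv, map_zero, hw]
  rw [ContinuousLinearMap.coe_coe] at hmem
  rw [h4] at hmem
  apply gvec_ne_zero l hl
  have := congrArg (fun w : X3 => w.2.2) hmem
  simpa using this

end TOps
end StmtAux


theorem stmt7 (R L : ell2 →L[ℂ] ell2)
    (hR0 : ∀ x : ell2, R x 0 = 0) (hRs : ∀ (x : ell2) (n : ℕ), R x (n + 1) = x n)
    (hL : ∀ (x : ell2) (n : ℕ), L x n = x (n + 1))
    (T : ell2 × ell2 × ell2 →L[ℂ] ell2 × ell2 × ell2)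
    (hT : ∀ v : ell2 × ell2 × ell2, T v = (R v.1, R v.2.1, L v.2.2)) :
    spec T = Metric.closedBall (0 : ℂ) 1 ∧ specA T = Metric.closedBall (0 : ℂ) 1 ∧
      specW T = Metric.closedBall (0 : ℂ) 1 ∧ poles T = ∅ ∧ lpoles T = ∅ ∧
      alpha T = 1 ∧ beta T = 2 ∧ (0 : ℂ) ∈ specA T \ specUW T ∧
      propZPia T ∧ ¬ propUWPi T := by
  classical
  have hT1 : ‖T‖ ≤ 1 := StmtAux.T_opnorm R L T hT hR0 hRs hL
  have hnotBB : ∀ l : ℂ, ‖l‖ ≤ 1 → ¬ boundedBelow (T - l • 1) :=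
    fun l hl h => StmtAux.notBB R L T hT hR0 hRs hL l hl h
  have hUnitBB : ∀ l : ℂ, l ∉ spectrum ℂ T → boundedBelow (T - l • 1) :=
    fun l hl => StmtAux.unit_bddBelow (StmtAux.unit_of_not_spec T hl)
  have hspec : spectrum ℂ T = Metric.closedBall (0:ℂ) 1 := by
    apply Set.Subset.antisymm
    · exact (spectrum.subset_closedBall_norm T).trans
        (Metric.closedBall_subset_closedBall hT1)
    · intro l hl
      rw [Metric.mem_closedBall, dist_zero_right] at hl
      by_contra hns
      exact hnotBB l hl (hUnitBB l hns)
  have hspecA : specA T = Metric.closedBall (0:ℂ) 1 := by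
    ext l
    simp only [specA, Set.mem_setOf_eq, Metric.mem_closedBall, dist_zero_right]
    constructor
    · intro h
      by_contra hgt
      push_neg at hgt
      have hns : l ∉ spectrum ℂ T := fun hmem => by
        rw [hspec, Metric.mem_closedBall, dist_zero_right] at hmem
        linarith
      exact h (hUnitBB l hns)
    · intro h
      exact hnotBB l h
  have hspecW : specW T = Metric.closedBall (0:ℂ) 1 := by
    ext l
    simp only [specW, Set.mem_setOf_eq, Metric.mem_closedBall, dist_zero_right]
    constructor
    · intro h
      by_contra hgt
      push_neg at hgt
      apply h
      have hns : l ∉ spectrum ℂ T := fun hmem => by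
        rw [hspec, Metric.mem_closedBall, dist_zero_right] at hmem
        linarith
      have hu := StmtAux.unit_of_not_spec T hns
      obtain ⟨hker, hrange⟩ := StmtAux.unit_ker_range hu
      have ha0 : alpha (T - l • 1) = 0 := by
        show Module.rank ℂ (LinearMap.ker ((T - l • 1 : (ell2 × ell2 × ell2) →L[ℂ] (ell2 × ell2 × ell2)) : (ell2 × ell2 × ell2) →ₗ[ℂ] (ell2 × ell2 × ell2))) = 0
        rw [hker]
        exact rank_bot ℂ _
      have hb0 : beta (T - l • 1) = 0 := by
        show Module.rank ℂ ((ell2 × ell2 × ell2) ⧸ LinearMap.range ((T - l • 1 : (ell2 × ell2 × ell2) →L[ℂ] (ell2 × ell2 × ell2)) : (ell2 × ell2 × ell2) →ₗ[ℂ] (ell2 × ell2 × ell2))) = 0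
        rw [hrange]
        haveI : Subsingleton ((ell2 × ell2 × ell2) ⧸ (⊤ : Submodule ℂ (ell2 × ell2 × ell2))) :=
          Submodule.Quotient.subsingleton_iff.mpr rfl
        exact rank_subsingleton' ℂ _
      refine ⟨?_, ?_, ?_, ?_⟩
      · rw [ha0]; exact Cardinal.aleph0_pos
      · rw [hb0]; exact Cardinal.aleph0_pos
      · rw [hrange]
        simp only [Submodule.top_coe]
        exact isClosed_univ
      · rw [ha0, hb0]
    · intro h hW
      rcases lt_or_eq_of_le h with hlt | heq
      · have ha := StmtAux.alphaT R L T hT hR0 hRs hL l hlt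
        have hb2 := StmtAux.betaT_ge2 R L T hT hR0 hRs l hlt
        obtain ⟨_, _, _, heqab⟩ := hW
        have hA : alpha (T - l • 1) = 1 := ha
        have hB : beta (T - l • 1) = 1 := by rw [← heqab]; exact hA
        have h2B : (2:Cardinal) ≤ beta (T - l • 1) := hb2
        rw [hB] at h2B
        exact absurd h2B (by norm_num)
      · obtain ⟨_, _, _, heqab⟩ := hW
        have hker := StmtAux.kerT_bot R L T hT hR0 hRs hL l heq
        have ha0 : alpha (T - l • 1) = 0 := by
          show Module.rank ℂ (LinearMap.ker ((T - l • 1 : (ell2 × ell2 × ell2) →L[ℂ] (ell2 × ell2 × ell2)) : (ell2 × ell2 × ell2) →ₗ[ℂ] (ell2 × ell2 × ell2))) = 0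
          rw [hker]
          exact rank_bot ℂ _
        have hb0 : Module.rank ℂ ((ell2 × ell2 × ell2) ⧸ LinearMap.range ((T - l • 1 : (ell2 × ell2 × ell2) →L[ℂ] (ell2 × ell2 × ell2)) : (ell2 × ell2 × ell2) →ₗ[ℂ] (ell2 × ell2 × ell2))) = 0 := by
          have : beta (T - l • 1) = 0 := by rw [← heqab]; exact ha0
          exact this
        have hrange : LinearMap.range ((T - l • 1 : (ell2 × ell2 × ell2) →L[ℂ] (ell2 × ell2 × ell2)) : (ell2 × ell2 × ell2) →ₗ[ℂ] (ell2 × ell2 × ell2)) = ⊤ :=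
          Submodule.Quotient.subsingleton_iff.mp (rank_zero_iff.mp hb0)
        exact hnotBB l h (StmtAux.unit_bddBelow (StmtAux.unit_of_bij hker hrange))
  have hpoles : poles T = ∅ := by
    rw [Set.eq_empty_iff_forall_notMem]
    intro l hl
    simp only [poles, Set.mem_setOf_eq] at hl
    obtain ⟨hls, hasc, hdesc⟩ := hl
    have hl1 : ‖l‖ ≤ 1 := by
      have hmem : l ∈ spectrum ℂ T := hls
      rw [hspec, Metric.mem_closedBall, dist_zero_right] at hmem
      exact hmem
    rcases lt_or_eq_of_le hl1 with hlt | heq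
    · obtain ⟨n, hn⟩ := hasc
      exact StmtAux.not_asc R L T hT hR0 hRs hL l hlt n hn
    · obtain ⟨n, hn⟩ := hdesc
      have hrange := StmtAux.surj_of_desc_circle R L T hT hR0 hRs hL l heq n hn
      have hker := StmtAux.kerT_bot R L T hT hR0 hRs hL l heq
      exact hnotBB l hl1 (StmtAux.unit_bddBelow (StmtAux.unit_of_bij hker hrange))
  have hlpoles : lpoles T = ∅ := by
    rw [Set.eq_empty_iff_forall_notMem]
    intro l hl
    simp only [lpoles, Set.mem_setOf_eq] at hl
    obtain ⟨hla, p, hasc, hcl⟩ := hl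
    have hl1 : ‖l‖ ≤ 1 := by
      have hmem : l ∈ specA T := hla
      rw [hspecA, Metric.mem_closedBall, dist_zero_right] at hmem
      exact hmem
    rcases lt_or_eq_of_le hl1 with hlt | heq
    · exact StmtAux.not_asc R L T hT hR0 hRs hL l hlt p hasc
    · have hkerpow : LinearMap.ker (((T - l • 1) ^ (p+1) : (ell2 × ell2 × ell2) →L[ℂ] (ell2 × ell2 × ell2)) : (ell2 × ell2 × ell2) →ₗ[ℂ] (ell2 × ell2 × ell2)) = ⊥ := by
        rw [LinearMap.ker_eq_bot']
        intro v hv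
        exact StmtAux.S_inj_circle R L T hT hR0 hRs hL l heq (p+1) v hv
      obtain ⟨c, hc, hb⟩ := StmtAux.bdd_below_of_inj_closed ((T - l • 1) ^ (p+1)) hkerpow hcl
      apply hnotBB l hl1
      refine ⟨c / (‖(T - l • 1) ^ p‖ + 1), by positivity, fun v => ?_⟩
      have h1 : c * ‖v‖ ≤ ‖((T - l • 1) ^ (p+1)) v‖ := hb v
      have h2 : ‖((T - l • 1) ^ (p+1)) v‖ ≤ ‖(T - l • 1) ^ p‖ * ‖(T - l • 1) v‖ := by
        rw [pow_succ, ContinuousLinearMap.mul_apply]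
        exact ContinuousLinearMap.le_opNorm _ _
      rw [div_mul_eq_mul_div, div_le_iff₀ (by positivity)]
      have h3 : c * ‖v‖ ≤ ‖(T - l • 1) ^ p‖ * ‖(T - l • 1) v‖ := le_trans h1 h2
      nlinarith [norm_nonneg ((T - l • 1) v), norm_nonneg ((T - l • 1) ^ p)]
  have hT0 : T - (0:ℂ) • 1 = T := by simp
  have halpha : alpha T = 1 := by
    have h := StmtAux.alphaT R L T hT hR0 hRs hL 0 (by norm_num)
    rw [hT0] at h
    exact h
  have hbeta : beta T = 2 := StmtAux.betaT_eq R L T hT hR0 hRs hL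
  have husw : isUSW T := by
    refine ⟨?_, ?_, ?_⟩
    · rw [halpha]; exact Cardinal.one_lt_aleph0
    · exact StmtAux.rangeT_closed R L T hT hR0 hRs hL
    · rw [halpha, hbeta]; exact one_le_two
  have h0A : (0:ℂ) ∈ specA T := by
    rw [hspecA]
    simp
  have h0UW : (0:ℂ) ∉ specUW T := by
    simp only [specUW, Set.mem_setOf_eq, not_not]
    rw [hT0]
    exact husw
  refine ⟨hspec, hspecA, hspecW, hpoles, hlpoles, halpha, hbeta, ⟨h0A, h0UW⟩, ?_, ?_⟩
  · show spec T \ specW T = lpoles T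
    have hs : spec T = spectrum ℂ T := rfl
    rw [hs, hlpoles, hspec, hspecW, Set.diff_self]
  · intro hp
    have hp' : specA T \ specUW T = poles T := hp
    rw [hpoles] at hp'
    have h0 : (0:ℂ) ∈ specA T \ specUW T := ⟨h0A, h0UW⟩
    rw [hp'] at h0
    exact h0
end
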